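/- arXiv:0910.4809 — 9 statements merged into one kernel-verified Lean document; each statement's English description precedes it below -/
import Mathlib

section
/- Let m, d ≥ 1 and let Λ¹, Λ², Λ³ be m-multisets in ℝ^d. Let 0 < ε₁ < 2^{-1/2} and 0 < ε₂ < 2^{-1/2}. Suppose there exist x₁, x₂ ∈ ℝ^d with |x₁| ≤ ε₁ and |x₂| ≤ ε₁ such that for every i ≤ m, (−x₁ + Λ¹_i) ∩ B_{1/ε₁}(0) = (−x₂ + Λ²_i) ∩ B_{1/ε₁}(0), and there exist x₂′, x₃′ ∈ ℝ^d with |x₂′| ≤ ε₂ and |x₃′| ≤ ε₂ such that for every i ≤ m, (−x₂′ + Λ²_i) ∩ B_{1/ε₂}(0) = (−x₃′ + Λ³_i) ∩ B_{1/ε₂}(0). Then there exist y, z ∈ ℝ^d with |y| ≤ ε₁ + ε₂ and |z| ≤ ε₁ + ε₂ such that for every i ≤ m, (−y + Λ¹_i) ∩ B_{1/(ε₁+ε₂)}(0) = (−z + Λ³_i) ∩ B_{1/(ε₁+ε₂)}(0). -/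
/-!
Write the two matchings as "`u + x₁ ∈ Λ¹ ↔ u + x₂ ∈ Λ²` for `‖u‖ ≤ 1/ε₁`" and
"`u + x₂' ∈ Λ² ↔ u + x₃' ∈ Λ³` for `‖u‖ ≤ 1/ε₂`". Take `y = x₁ + x₂'` and `z = x₃' + x₂`.
For `‖v‖ ≤ 1/(ε₁+ε₂)` the first matching applies to `u = v + x₂'` and the second to
`u = v + x₂`, and both give the same point `v + x₂ + x₂'` of `Λ²`. The radii fit because
`1/(ε₁+ε₂) + ε₂ ≤ 1/ε₁`, which is equivalent to `ε₁ (ε₁+ε₂) ≤ 1`; this is where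
`ε₁, ε₂ < 2^{-1/2}` enters.
-/

open Metric Set

section Windows

variable {E : Type*} [SeminormedAddCommGroup E]

lemma image_sub_inter_closedBall_eq_iff {S T : Set E} {x y : E} {R : ℝ} :
    ((fun s => s - x) '' S) ∩ closedBall 0 R = ((fun s => s - y) '' T) ∩ closedBall 0 R ↔
      ∀ u : E, ‖u‖ ≤ R → (u + x ∈ S ↔ u + y ∈ T) := by
  have mem_image : ∀ (z u : E) (A : Set E), u ∈ (fun s => s - z) '' A ↔ u + z ∈ A := by
    simp [sub_eq_iff_eq_add]
  simp only [Set.ext_iff, mem_inter_iff, mem_closedBall_zero_iff, mem_image]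
  exact forall_congr' fun u => ⟨fun h hu => by simpa [hu] using h, and_congr_left⟩

lemma image_sub_inter_closedBall_trans {S₁ S₂ S₃ : Set E} {x₁ x₂ x₂' x₃' : E} {r₁ r₂ R : ℝ}
    (h₁ : ((fun s => s - x₁) '' S₁) ∩ closedBall 0 r₁ =
      ((fun s => s - x₂) '' S₂) ∩ closedBall 0 r₁)
    (h₂ : ((fun s => s - x₂') '' S₂) ∩ closedBall 0 r₂ =
      ((fun s => s - x₃') '' S₃) ∩ closedBall 0 r₂)
    (hr₁ : R + ‖x₂'‖ ≤ r₁) (hr₂ : R + ‖x₂‖ ≤ r₂) :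
    ((fun s => s - (x₁ + x₂')) '' S₁) ∩ closedBall 0 R =
      ((fun s => s - (x₃' + x₂)) '' S₃) ∩ closedBall 0 R := by
  rw [image_sub_inter_closedBall_eq_iff] at h₁ h₂ ⊢
  intro v hv
  have hv₁ : ‖v + x₂'‖ ≤ r₁ := (norm_add_le _ _).trans (by linarith)
  have hv₂ : ‖v + x₂‖ ≤ r₂ := (norm_add_le _ _).trans (by linarith)
  calc v + (x₁ + x₂') ∈ S₁ ↔ v + x₂' + x₁ ∈ S₁ := by rw [add_comm x₁, add_assoc]
    _ ↔ v + x₂' + x₂ ∈ S₂ := h₁ _ hv₁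
    _ ↔ v + x₂ + x₂' ∈ S₂ := by rw [add_right_comm]
    _ ↔ v + x₂ + x₃' ∈ S₃ := h₂ _ hv₂
    _ ↔ v + (x₃' + x₂) ∈ S₃ := by rw [add_comm x₃', add_assoc]

end Windows

lemma mul_add_le_one_of_lt_inv_sqrt_two {a b : ℝ} (ha : 0 < a) (hb : 0 < b)
    (ha' : a < (Real.sqrt 2)⁻¹) (hb' : b < (Real.sqrt 2)⁻¹) : a * (a + b) ≤ 1 := by
  have hs : (Real.sqrt 2)⁻¹ * (Real.sqrt 2)⁻¹ = 1 / 2 := by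
    rw [← mul_inv, Real.mul_self_sqrt zero_le_two, one_div]
  nlinarith [mul_lt_mul'' ha' ha' ha.le ha.le, mul_lt_mul'' ha' hb' ha.le hb.le]

lemma one_div_add_add_le_one_div {a b : ℝ} (ha : 0 < a) (hb : 0 < b)
    (hab : a * (a + b) ≤ 1) : 1 / (a + b) + b ≤ 1 / a := by
  rw [div_add' _ _ _ (by positivity), div_le_div_iff₀ (by positivity) ha]
  nlinarith [mul_le_mul_of_nonneg_left hab hb.le]

theorem stmt_0_general {m d : ℕ}
    (Λ₁ Λ₂ Λ₃ : Fin m → Set (EuclideanSpace ℝ (Fin d)))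
    {ε₁ ε₂ : ℝ} (hε₁ : 0 < ε₁) (hε₁' : ε₁ < (Real.sqrt 2)⁻¹)
    (hε₂ : 0 < ε₂) (hε₂' : ε₂ < (Real.sqrt 2)⁻¹)
    (h₁ : ∃ x₁ x₂ : EuclideanSpace ℝ (Fin d), ‖x₁‖ ≤ ε₁ ∧ ‖x₂‖ ≤ ε₁ ∧
      ∀ i : Fin m,
        ((fun s => s - x₁) '' Λ₁ i) ∩ closedBall 0 (1 / ε₁)
          = ((fun s => s - x₂) '' Λ₂ i) ∩ closedBall 0 (1 / ε₁))
    (h₂ : ∃ x₂' x₃' : EuclideanSpace ℝ (Fin d), ‖x₂'‖ ≤ ε₂ ∧ ‖x₃'‖ ≤ ε₂ ∧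
      ∀ i : Fin m,
        ((fun s => s - x₂') '' Λ₂ i) ∩ closedBall 0 (1 / ε₂)
          = ((fun s => s - x₃') '' Λ₃ i) ∩ closedBall 0 (1 / ε₂)) :
    ∃ y z : EuclideanSpace ℝ (Fin d), ‖y‖ ≤ ε₁ + ε₂ ∧ ‖z‖ ≤ ε₁ + ε₂ ∧
      ∀ i : Fin m,
        ((fun s => s - y) '' Λ₁ i) ∩ closedBall 0 (1 / (ε₁ + ε₂))
          = ((fun s => s - z) '' Λ₃ i) ∩ closedBall 0 (1 / (ε₁ + ε₂)) := by
  obtain ⟨x₁, x₂, hx₁, hx₂, H₁⟩ := h₁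
  obtain ⟨x₂', x₃', hx₂', hx₃', H₂⟩ := h₂
  have hr₁ : 1 / (ε₁ + ε₂) + ε₂ ≤ 1 / ε₁ := one_div_add_add_le_one_div hε₁ hε₂
    (mul_add_le_one_of_lt_inv_sqrt_two hε₁ hε₂ hε₁' hε₂')
  have hr₂ : 1 / (ε₁ + ε₂) + ε₁ ≤ 1 / ε₂ := by
    rw [add_comm ε₁]
    exact one_div_add_add_le_one_div hε₂ hε₁
      (mul_add_le_one_of_lt_inv_sqrt_two hε₂ hε₁ hε₂' hε₁')
  refine ⟨x₁ + x₂', x₃' + x₂, (norm_add_le _ _).trans (by linarith),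
    (norm_add_le _ _).trans (by linarith), fun i => ?_⟩
  exact image_sub_inter_closedBall_trans (H₁ i) (H₂ i) (by linarith) (by linarith)

/-- the triangle-inequality step for the metric on multisets
(`B_r(c)` is the closed Euclidean ball, `(fun s => s - x) '' S` is `-x + S`). -/
theorem stmt_0 {m d : ℕ} (hm : 1 ≤ m) (hd : 1 ≤ d)
    (Λ₁ Λ₂ Λ₃ : Fin m → Set (EuclideanSpace ℝ (Fin d)))
    {ε₁ ε₂ : ℝ} (hε₁ : 0 < ε₁) (hε₁' : ε₁ < (Real.sqrt 2)⁻¹)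
    (hε₂ : 0 < ε₂) (hε₂' : ε₂ < (Real.sqrt 2)⁻¹)
    (h₁ : ∃ x₁ x₂ : EuclideanSpace ℝ (Fin d), ‖x₁‖ ≤ ε₁ ∧ ‖x₂‖ ≤ ε₁ ∧
      ∀ i : Fin m,
        ((fun s => s - x₁) '' Λ₁ i) ∩ closedBall 0 (1 / ε₁)
          = ((fun s => s - x₂) '' Λ₂ i) ∩ closedBall 0 (1 / ε₁))
    (h₂ : ∃ x₂' x₃' : EuclideanSpace ℝ (Fin d), ‖x₂'‖ ≤ ε₂ ∧ ‖x₃'‖ ≤ ε₂ ∧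
      ∀ i : Fin m,
        ((fun s => s - x₂') '' Λ₂ i) ∩ closedBall 0 (1 / ε₂)
          = ((fun s => s - x₃') '' Λ₃ i) ∩ closedBall 0 (1 / ε₂)) :
    ∃ y z : EuclideanSpace ℝ (Fin d), ‖y‖ ≤ ε₁ + ε₂ ∧ ‖z‖ ≤ ε₁ + ε₂ ∧
      ∀ i : Fin m,
        ((fun s => s - y) '' Λ₁ i) ∩ closedBall 0 (1 / (ε₁ + ε₂))
          = ((fun s => s - z) '' Λ₃ i) ∩ closedBall 0 (1 / (ε₁ + ε₂)) :=
  stmt_0_general Λ₁ Λ₂ Λ₃ hε₁ hε₁' hε₂ hε₂' h₁ h₂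
end

section
/- Let m, d ≥ 1. For m-multisets Λ, Λ′ in ℝ^d define d̃(Λ,Λ′) = inf{ε > 0 : there exist x, y ∈ B_ε(0) such that for all i ≤ m, B_{1/ε}(0) ∩ (−x + Λ_i) = B_{1/ε}(0) ∩ (−y + Λ′_i)} (with inf ∅ = +∞), and d(Λ,Λ′) = min{d̃(Λ,Λ′), 2^{−1/2}}. Then d satisfies the triangle inequality: for all m-multisets Λ¹, Λ², Λ³ in ℝ^d, d(Λ¹,Λ³) ≤ d(Λ¹,Λ²) + d(Λ²,Λ³). -/
/-!
Write `Λ ~ε Λ'` when `Λ` and `Λ'` agree on `B_{1/ε}(0)` after translations by `x, y ∈ B_ε(0)`.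
If `Λ₁ ~ε₁ Λ₂` via `(x₁, y₁)` and `Λ₂ ~ε₂ Λ₃` via `(x₂, y₂)`, the mismatch `y₁ - x₂` has norm
at most `ε₁ + ε₂`, so it splits as `s + t` with `‖s‖ ≤ ε₂` and `‖t‖ ≤ ε₁`; translating by
`x₁ - s` and `y₂ + t` then gives `Λ₁ ~(ε₁+ε₂) Λ₃`, because for `ε₁ + ε₂ ≤ 1` the enlarged balls
`B_{1/(ε₁+ε₂) + ε₂}` and `B_{1/(ε₁+ε₂) + ε₁}` still fit into `B_{1/ε₁}` and `B_{1/ε₂}`.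
Capping at `2^{-1/2} ≤ 1` turns this additivity of the admissible `ε` into the triangle inequality.
-/

open Metric Set

/-- The metric `d(Λ,Λ') = min{d̃(Λ,Λ'), 2^{-1/2}}` on `m`-multisets of `ℝ^d`, where
`d̃(Λ,Λ') = inf{ε > 0 : ∃ x y ∈ B_ε(0), ∀ i, B_{1/ε}(0) ∩ (-x+Λᵢ) = B_{1/ε}(0) ∩ (-y+Λ'ᵢ)}`
with `inf ∅ = +∞`.  Since always `2^{-1/2} < ∞`, this minimum equals the (real) infimum of
the above set of ε's with `2^{-1/2}` adjoined, which is how we formalize it. -/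
noncomputable def multisetDist {m d : ℕ}
    (Λ Λ' : Fin m → Set (EuclideanSpace ℝ (Fin d))) : ℝ :=
  sInf ({ε : ℝ | 0 < ε ∧ ∃ x ∈ closedBall (0 : EuclideanSpace ℝ (Fin d)) ε,
      ∃ y ∈ closedBall (0 : EuclideanSpace ℝ (Fin d)) ε,
      ∀ i : Fin m,
        closedBall 0 (1 / ε) ∩ ((fun s => s - x) '' Λ i)
          = closedBall 0 (1 / ε) ∩ ((fun s => s - y) '' Λ' i)} ∪ {(Real.sqrt 2)⁻¹})

open Pointwise

lemma csInf_union_singleton_le_add {A B C : Set ℝ} {c : ℝ} (hc : 0 ≤ c)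
    (hA : ∀ a ∈ A, 0 ≤ a) (hB : ∀ b ∈ B, 0 ≤ b) (hC : ∀ x ∈ C, 0 ≤ x)
    (hABC : ∀ a ∈ A, ∀ b ∈ B, a + b < c → a + b ∈ C) :
    sInf (C ∪ {c}) ≤ sInf (A ∪ {c}) + sInf (B ∪ {c}) := by
  have hnonneg : ∀ S : Set ℝ, (∀ x ∈ S, 0 ≤ x) → ∀ x ∈ S ∪ {c}, 0 ≤ x := by
    rintro S hS x (hx | rfl)
    exacts [hS x hx, hc]
  have hbdd : ∀ S : Set ℝ, (∀ x ∈ S, 0 ≤ x) → BddBelow (S ∪ {c}) :=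
    fun S hS => ⟨0, hnonneg S hS⟩
  have hne : ∀ S : Set ℝ, (S ∪ {c}).Nonempty := fun S => ⟨c, Or.inr rfl⟩
  rw [← csInf_add (hne A) (hbdd A hA) (hne B) (hbdd B hB)]
  refine le_csInf ((hne A).add (hne B)) ?_
  rintro _ ⟨a, ha, b, hb, rfl⟩
  rcases lt_or_ge (a + b) c with hlt | hge
  · have hbc : b < c := by linarith [hnonneg A hA a ha]
    have hac : a < c := by linarith [hnonneg B hB b hb]
    have ha' : a ∈ A := ha.resolve_right hac.ne
    have hb' : b ∈ B := hb.resolve_right hbc.ne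
    exact csInf_le (hbdd C hC) (Or.inl (hABC a ha' b hb' hlt))
  · exact (csInf_le (hbdd C hC) (Or.inr rfl)).trans hge

lemma one_div_add_le_one_div {a b : ℝ} (ha : 0 < a) (hb : 0 < b) (hab : a + b ≤ 1) :
    1 / (a + b) + b ≤ 1 / a := by
  have hprod : a * (a + b) ≤ 1 := by nlinarith
  rw [div_add' _ _ _ (by positivity), div_le_div_iff₀ (by positivity) ha]
  nlinarith [mul_pos ha hb]

section AgreesUpTo

variable {ι E : Type*} [NormedAddCommGroup E]

lemma inter_image_sub_eq_iff {S T : Set E} {r : ℝ} {x y : E} :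
    closedBall 0 r ∩ ((fun s => s - x) '' S) = closedBall 0 r ∩ ((fun s => s - y) '' T) ↔
      ∀ z, ‖z‖ ≤ r → (z + x ∈ S ↔ z + y ∈ T) := by
  simp [Set.ext_iff, sub_eq_iff_eq_add]

-- `multisetDist Λ Λ'` is definitionally `sInf ({ε | AgreesUpTo Λ Λ' ε} ∪ {(√2)⁻¹})`.
def AgreesUpTo (Λ Λ' : ι → Set E) (ε : ℝ) : Prop :=
  0 < ε ∧ ∃ x ∈ closedBall (0 : E) ε, ∃ y ∈ closedBall (0 : E) ε, ∀ i,
    closedBall 0 (1 / ε) ∩ ((fun s => s - x) '' Λ i)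
      = closedBall 0 (1 / ε) ∩ ((fun s => s - y) '' Λ' i)

lemma agreesUpTo_iff {Λ Λ' : ι → Set E} {ε : ℝ} :
    AgreesUpTo Λ Λ' ε ↔ 0 < ε ∧ ∃ x y : E, ‖x‖ ≤ ε ∧ ‖y‖ ≤ ε ∧
      ∀ i z, ‖z‖ ≤ 1 / ε → (z + x ∈ Λ i ↔ z + y ∈ Λ' i) := by
  simp only [AgreesUpTo, inter_image_sub_eq_iff, mem_closedBall_zero_iff]
  grind

lemma AgreesUpTo.trans [NormedSpace ℝ E] [ProperSpace E] {Λ₁ Λ₂ Λ₃ : ι → Set E} {ε₁ ε₂ : ℝ}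
    (h₁₂ : AgreesUpTo Λ₁ Λ₂ ε₁) (h₂₃ : AgreesUpTo Λ₂ Λ₃ ε₂) (hε : ε₁ + ε₂ ≤ 1) :
    AgreesUpTo Λ₁ Λ₃ (ε₁ + ε₂) := by
  rw [agreesUpTo_iff] at h₁₂ h₂₃ ⊢
  obtain ⟨hε₁, x₁, y₁, hx₁, hy₁, H₁₂⟩ := h₁₂
  obtain ⟨hε₂, x₂, y₂, hx₂, hy₂, H₂₃⟩ := h₂₃
  have hmismatch : y₁ - x₂ ∈ closedBall (0 : E) ε₂ + closedBall (0 : E) ε₁ := by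
    rw [closedBall_add_closedBall hε₂.le hε₁.le, add_zero, mem_closedBall_zero_iff]
    linarith [norm_sub_le y₁ x₂]
  obtain ⟨s, hs, t, ht, hst : s + t = y₁ - x₂⟩ := hmismatch
  rw [mem_closedBall_zero_iff] at hs ht
  rw [eq_sub_iff_add_eq] at hst
  refine ⟨by positivity, x₁ - s, y₂ + t, ?_, ?_, fun i z hz => ?_⟩
  · linarith [norm_sub_le x₁ s]
  · linarith [norm_add_le y₂ t]
  have hzs : ‖z - s‖ ≤ 1 / ε₁ := by
    linarith [norm_sub_le z s, one_div_add_le_one_div hε₁ hε₂ hε]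
  have hzt : ‖z + t‖ ≤ 1 / ε₂ := by
    have hball := one_div_add_le_one_div hε₂ hε₁ (by linarith)
    rw [add_comm ε₂] at hball
    linarith [norm_add_le z t]
  have h₁₂ := H₁₂ i (z - s) hzs
  have h₂₃ := H₂₃ i (z + t) hzt
  rw [show z - s + y₁ = z + t + x₂ by rw [← hst]; abel] at h₁₂
  rw [show z - s + x₁ = z + (x₁ - s) by abel] at h₁₂
  rw [show z + t + y₂ = z + (y₂ + t) by abel] at h₂₃
  exact h₁₂.trans h₂₃

end AgreesUpTo

theorem stmt_1_general {m d : ℕ}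
    (Λ₁ Λ₂ Λ₃ : Fin m → Set (EuclideanSpace ℝ (Fin d))) :
    multisetDist Λ₁ Λ₃ ≤ multisetDist Λ₁ Λ₂ + multisetDist Λ₂ Λ₃ := by
  have hcap : (Real.sqrt 2)⁻¹ ≤ 1 := inv_le_one_of_one_le₀ (Real.one_le_sqrt.2 one_le_two)
  exact csInf_union_singleton_le_add (by positivity) (fun _ h => h.1.le) (fun _ h => h.1.le)
    (fun _ h => h.1.le) fun ε₁ h₁₂ ε₂ h₂₃ hlt => AgreesUpTo.trans h₁₂ h₂₃ (by linarith)

/-- `d` satisfies the triangle inequality. -/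
theorem stmt_1 {m d : ℕ} (hm : 1 ≤ m) (hd : 1 ≤ d)
    (Λ₁ Λ₂ Λ₃ : Fin m → Set (EuclideanSpace ℝ (Fin d))) :
    multisetDist Λ₁ Λ₃ ≤ multisetDist Λ₁ Λ₂ + multisetDist Λ₂ Λ₃ :=
  stmt_1_general Λ₁ Λ₂ Λ₃
end

section
/- Let Λ be a Delone multiset in ℝ^d with finite local complexity. Then for every sequence (h_n) in ℝ^d there exist a subsequence (h_{n_k}) and an m-multiset Γ in ℝ^d such that every cluster of Γ is a translate of a cluster of Λ and d(−h_{n_k} + Λ, Γ) → 0 as k → ∞, where d is the metric d(Λ,Λ′) = min{d̃(Λ,Λ′), 2^{−1/2}} with d̃(Λ,Λ′) = inf{ε > 0 : there exist x, y ∈ B_ε(0) such that for all i ≤ m, B_{1/ε}(0) ∩ (−x + Λ_i) = B_{1/ε}(0) ∩ (−y + Λ′_i)}. -/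
open Metric Set Filter Topology

/-- A set in `ℝ^d` is Delone: uniformly discrete and relatively dense
(every closed ball of some radius `R` contains a point of the set). -/
def IsDelone {d : ℕ} (D : Set (EuclideanSpace ℝ (Fin d))) : Prop :=
  (∃ r > (0 : ℝ), ∀ x ∈ D, ∀ y ∈ D, x ≠ y → r ≤ dist x y) ∧
  (∃ R > (0 : ℝ), ∀ c : EuclideanSpace ℝ (Fin d), ∃ p ∈ D, p ∈ closedBall c R)

/-- A Delone multiset: each component and the support are Delone. -/
def IsDeloneMultiset {m d : ℕ} (Λ : Fin m → Set (EuclideanSpace ℝ (Fin d))) : Prop :=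
  (∀ i, IsDelone (Λ i)) ∧ IsDelone (⋃ i, Λ i)

/-- `P` is a cluster of `Λ`: componentwise a finite subset. -/
def IsClusterOf {m d : ℕ} (Λ P : Fin m → Set (EuclideanSpace ℝ (Fin d))) : Prop :=
  ∀ i, P i ⊆ Λ i ∧ (P i).Finite

/-- Finite local complexity: for each `R > 0` there is a finite set `Y ⊆ supp(Λ)` such that
every `R`-patch of `Λ` centered at a point of the support is a translate of an `R`-patch
centered at a point of `Y`. -/
def HasFLC {m d : ℕ} (Λ : Fin m → Set (EuclideanSpace ℝ (Fin d))) : Prop :=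
  ∀ R > (0 : ℝ), ∃ Y : Set (EuclideanSpace ℝ (Fin d)), Y.Finite ∧ Y ⊆ ⋃ i, Λ i ∧
    ∀ x ∈ ⋃ i, Λ i, ∃ y ∈ Y, ∀ i,
      closedBall x R ∩ Λ i = (fun s => s + (x - y)) '' (closedBall y R ∩ Λ i)

/-
Relative density puts a point `p n` of the support within bounded distance of `h n`; along a
subsequence the offsets `p n - h n` converge to some `c`. By finite local complexity the patches
of radius `N` of `Λ` around the points `p n - c` take only finitely many values, so a diagonal
subsequence makes each of them eventually constant. The limit `Γ` is then the set-theoretic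
liminf of the translates `Λ - (p n - c)`: on every ball it eventually agrees with them, which
gives convergence in `multisetDist` after the vanishing shifts `p n - h n - c`, and any finite
cluster of `Γ` already lies in a single translate of `Λ`.
-/

section Patches

variable {ι β E : Type*} [SeminormedAddCommGroup E]

def centeredPatch (Λ : ι → Set E) (x : E) (r : ℝ) : ι → Set E :=
  fun i => closedBall 0 r ∩ (fun s => s - x) '' Λ i

lemma closedBall_zero_inter_image_sub (c : E) (r : ℝ) (A : Set E) :
    closedBall 0 r ∩ (fun s => s - c) '' A = (fun s => s - c) '' (closedBall c r ∩ A) := by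
  rw [inter_comm, ← image_inter_preimage, inter_comm]
  congr 2
  ext z
  simp [dist_eq_norm]

lemma centeredPatch_eq_of_inter_closedBall_eq {Λ : ι → Set E} {x y : E} {r : ℝ}
    (h : ∀ i, closedBall x r ∩ Λ i = (fun s => s + (x - y)) '' (closedBall y r ∩ Λ i)) :
    centeredPatch Λ x r = centeredPatch Λ y r := by
  funext i
  simp only [centeredPatch, closedBall_zero_inter_image_sub, h i, image_image]
  congr 1
  funext s
  abel

lemma centeredPatch_of_le (Λ : ι → Set E) (x : E) {r R : ℝ} (hrR : r ≤ R) :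
    centeredPatch Λ x r = fun i => closedBall 0 r ∩ centeredPatch Λ x R i := by
  funext i
  simp only [centeredPatch, ← inter_assoc, inter_eq_left.2 (closedBall_subset_closedBall hrR)]

lemma centeredPatch_eq_of_le {Λ Λ' : ι → Set E} {x y : E} {r R : ℝ} (hrR : r ≤ R)
    (h : centeredPatch Λ x R = centeredPatch Λ' y R) :
    centeredPatch Λ x r = centeredPatch Λ' y r := by
  rw [centeredPatch_of_le Λ x hrR, h, ← centeredPatch_of_le Λ' y hrR]

lemma centeredPatch_sub_eq (Λ : ι → Set E) (x c : E) {r R : ℝ} (hrR : r + ‖c‖ ≤ R) :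
    centeredPatch Λ (x - c) r =
      fun i => closedBall 0 r ∩ (fun s => s + c) '' centeredPatch Λ x R i := by
  funext i
  ext z
  constructor
  · rintro ⟨hz, s, hs, rfl⟩
    refine ⟨hz, s - x, ⟨?_, s, hs, rfl⟩, sub_add s x c⟩
    rw [mem_closedBall_zero_iff] at hz ⊢
    calc ‖s - x‖ = ‖s - (x - c) - c‖ := by rw [sub_sub, sub_add_cancel]
      _ ≤ r + ‖c‖ := (norm_sub_le _ _).trans (by gcongr)
      _ ≤ R := hrR
  · rintro ⟨hz, _, ⟨-, s, hs, rfl⟩, rfl⟩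
    exact ⟨hz, s, hs, (sub_add s x c).symm⟩

lemma centeredPatch_image_sub (Λ : ι → Set E) (a x : E) (r : ℝ) :
    centeredPatch (fun i => (fun s => s - a) '' Λ i) x r = centeredPatch Λ (a + x) r := by
  funext i
  simp only [centeredPatch, image_image, sub_sub]

def liminfTranslate (Λ : ι → Set E) (q : β → E) (l : Filter β) : ι → Set E :=
  fun i => liminf (fun k => (fun s => s - q k) '' Λ i) l

lemma centeredPatch_liminfTranslate {l : Filter β} [l.NeBot] {Λ P : ι → Set E}
    {q : β → E} {r : ℝ} (h : ∀ᶠ k in l, centeredPatch Λ (q k) r = P) :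
    centeredPatch (liminfTranslate Λ q l) 0 r = P := by
  funext i
  ext z
  simp only [centeredPatch, liminfTranslate, sub_zero, image_id', mem_inter_iff,
    mem_liminf_iff_eventually_mem]
  constructor
  · rintro ⟨hz, hzΛ⟩
    obtain ⟨k, hk, hzk⟩ := (h.and hzΛ).exists
    rw [← hk]
    exact ⟨hz, hzk⟩
  · intro hz
    have hzk : ∀ᶠ k in l, z ∈ centeredPatch Λ (q k) r i := h.mono fun k hk => hk ▸ hz
    exact ⟨hzk.exists.choose_spec.1, hzk.mono fun k hk => hk.2⟩

end Patches

lemma exists_strictMono_eventually_eq_of_finite {ι α : Type*} [Countable ι] {S : ι → Set α}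
    (hS : ∀ i, (S i).Finite) {g : ℕ → ι → α} (hg : ∀ k i, g k i ∈ S i) :
    ∃ a : ι → α, ∃ φ : ℕ → ℕ, StrictMono φ ∧
      ∀ i, ∀ᶠ k in atTop, g (φ k) i = a i := by
  let _ : ∀ i, TopologicalSpace (S i) := fun _ => ⊥
  have _ : ∀ i, DiscreteTopology (S i) := fun _ => ⟨rfl⟩
  have _ : ∀ i, Finite (S i) := fun i => (hS i).to_subtype
  obtain ⟨a, -, φ, hφ, hlim⟩ := isCompact_univ.tendsto_subseq
    (x := fun k i => (⟨g k i, hg k i⟩ : S i)) fun _ => mem_univ _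
  refine ⟨fun i => a i, φ, hφ, fun i => ?_⟩
  exact Eventually.mono (tendsto_pi_nhds.1 hlim i ((isOpen_discrete {a i}).mem_nhds rfl))
    fun k hk => congrArg Subtype.val hk

section Multisets

variable {m d : ℕ} {β : Type*}

lemma multisetDist_nonneg (Λ Λ' : Fin m → Set (EuclideanSpace ℝ (Fin d))) :
    0 ≤ multisetDist Λ Λ' :=
  Real.sInf_nonneg <| by rintro ε (⟨hε, -⟩ | rfl) <;> positivity

lemma multisetDist_le {Λ Λ' : Fin m → Set (EuclideanSpace ℝ (Fin d))} {ε : ℝ}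
    {x y : EuclideanSpace ℝ (Fin d)} (hε : 0 < ε) (hx : x ∈ closedBall 0 ε)
    (hy : y ∈ closedBall 0 ε) (h : centeredPatch Λ x (1 / ε) = centeredPatch Λ' y (1 / ε)) :
    multisetDist Λ Λ' ≤ ε :=
  csInf_le ⟨0, by rintro δ (⟨hδ, -⟩ | rfl) <;> positivity⟩
    (Or.inl ⟨hε, x, hx, y, hy, fun i => congrFun h i⟩)

lemma tendsto_multisetDist_zero {l : Filter β}
    {Λ : β → Fin m → Set (EuclideanSpace ℝ (Fin d))}
    {Γ : Fin m → Set (EuclideanSpace ℝ (Fin d))}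
    {x : β → EuclideanSpace ℝ (Fin d)} (hx : Tendsto x l (𝓝 0))
    (hloc : ∀ N : ℕ, ∀ᶠ k in l, centeredPatch (Λ k) (x k) N = centeredPatch Γ 0 N) :
    Tendsto (fun k => multisetDist (Λ k) Γ) l (𝓝 0) := by
  rw [Metric.tendsto_nhds]
  intro ε hε
  have hε₂ : 0 < ε / 2 := half_pos hε
  obtain ⟨N, hN⟩ := exists_nat_ge (1 / (ε / 2))
  filter_upwards [hx (closedBall_mem_nhds 0 hε₂), hloc N] with k hxk hk
  have := multisetDist_le hε₂ hxk (mem_closedBall_self hε₂.le) (centeredPatch_eq_of_le hN hk)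
  rw [Real.dist_eq, sub_zero, abs_of_nonneg (multisetDist_nonneg _ _)]
  linarith

lemma IsClusterOf.exists_translate_of_liminfTranslate {l : Filter β} [l.NeBot]
    {Λ P : Fin m → Set (EuclideanSpace ℝ (Fin d))} {q : β → EuclideanSpace ℝ (Fin d)}
    (hP : IsClusterOf (liminfTranslate Λ q l) P) :
    ∃ t : EuclideanSpace ℝ (Fin d), ∃ Q, IsClusterOf Λ Q ∧
      ∀ i, P i = (fun q => q + t) '' Q i := by
  have hev : ∀ᶠ k in l, ∀ i, P i ⊆ (fun s => s - q k) '' Λ i :=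
    eventually_all.2 fun i => (eventually_all_finite (hP i).2).2 fun z hz =>
      mem_liminf_iff_eventually_mem.1 ((hP i).1 hz)
  obtain ⟨k, hk⟩ := hev.exists
  refine ⟨-q k, fun i => (fun z => z + q k) '' P i,
    fun i => ⟨?_, (hP i).2.image _⟩, fun i => ?_⟩
  · rintro _ ⟨z, hz, rfl⟩
    obtain ⟨w, hw, rfl⟩ := hk i hz
    simpa using hw
  · rw [image_image]
    simp only [add_neg_cancel_right, image_id']

lemma HasFLC.finite_centeredPatch {Λ : Fin m → Set (EuclideanSpace ℝ (Fin d))}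
    (hΛ : HasFLC Λ) {R : ℝ} (hR : 0 < R) :
    ((fun x => centeredPatch Λ x R) '' ⋃ i, Λ i).Finite := by
  obtain ⟨Y, hY, -, hYΛ⟩ := hΛ R hR
  refine (hY.image fun y => centeredPatch Λ y R).subset ?_
  rintro _ ⟨x, hx, rfl⟩
  obtain ⟨y, hy, hxy⟩ := hYΛ x hx
  exact ⟨y, hy, (centeredPatch_eq_of_inter_closedBall_eq hxy).symm⟩

lemma HasFLC.finite_centeredPatch_sub {Λ : Fin m → Set (EuclideanSpace ℝ (Fin d))}
    (hΛ : HasFLC Λ) (c : EuclideanSpace ℝ (Fin d)) (r : ℝ) :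
    ((fun x => centeredPatch Λ (x - c) r) '' ⋃ i, Λ i).Finite := by
  have hR : 0 < |r| + ‖c‖ + 1 := by positivity
  refine ((hΛ.finite_centeredPatch hR).image
    fun P i => closedBall 0 r ∩ (fun s => s + c) '' P i).subset ?_
  rintro _ ⟨x, hx, rfl⟩
  exact ⟨_, mem_image_of_mem _ hx,
    (centeredPatch_sub_eq Λ x c (by linarith [le_abs_self r])).symm⟩

end Multisets

theorem stmt_2_general {m d : ℕ}
    (Λ : Fin m → Set (EuclideanSpace ℝ (Fin d)))
    (hDel : IsDeloneMultiset Λ) (hFLC : HasFLC Λ)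
    (h : ℕ → EuclideanSpace ℝ (Fin d)) :
    ∃ φ : ℕ → ℕ, StrictMono φ ∧ ∃ Γ : Fin m → Set (EuclideanSpace ℝ (Fin d)),
      (∀ P : Fin m → Set (EuclideanSpace ℝ (Fin d)), IsClusterOf Γ P →
        ∃ t : EuclideanSpace ℝ (Fin d), ∃ Q, IsClusterOf Λ Q ∧
          ∀ i, P i = (fun q => q + t) '' Q i) ∧
      Tendsto (fun k => multisetDist (fun i => (fun s => s - h (φ k)) '' Λ i) Γ)
        atTop (𝓝 0) := by
  obtain ⟨-, R, -, hR⟩ := hDel.2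
  choose p hp hpR using fun n => hR (h n)
  obtain ⟨c, -, ψ, hψ, hc⟩ :=
    tendsto_subseq_of_bounded (isBounded_closedBall (x := 0) (r := R))
      fun n => mem_closedBall_zero_iff.2 (mem_closedBall_iff_norm.1 (hpR n))
  obtain ⟨P, χ, hχ, hP⟩ := exists_strictMono_eventually_eq_of_finite
    (fun N : ℕ => hFLC.finite_centeredPatch_sub c N)
    (g := fun k N => centeredPatch Λ (p (ψ k) - c) N) fun k _ => mem_image_of_mem _ (hp (ψ k))
  refine ⟨ψ ∘ χ, hψ.comp hχ, liminfTranslate Λ (fun k => p (ψ (χ k)) - c) atTop,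
    fun Q hQ => hQ.exists_translate_of_liminfTranslate, ?_⟩
  refine tendsto_multisetDist_zero (x := fun k => p (ψ (χ k)) - h (ψ (χ k)) - c) ?_ fun N => ?_
  · exact tendsto_sub_nhds_zero_iff.2 (hc.comp hχ.tendsto_atTop)
  · filter_upwards [hP N] with k hk
    rw [centeredPatch_image_sub, Function.comp_apply, ← add_sub_assoc, add_sub_cancel,
      centeredPatch_liminfTranslate (hP N)]
    exact hk

/-- sequential compactness of the hull of an FLC Delone multiset:
every sequence of translates of `Λ` has a subsequence converging (in the metric `d`)
to a multiset `Γ` all of whose clusters are translates of clusters of `Λ`. -/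
theorem stmt_2 {m d : ℕ} (hm : 1 ≤ m) (hd : 1 ≤ d)
    (Λ : Fin m → Set (EuclideanSpace ℝ (Fin d)))
    (hDel : IsDeloneMultiset Λ) (hFLC : HasFLC Λ)
    (h : ℕ → EuclideanSpace ℝ (Fin d)) :
    ∃ φ : ℕ → ℕ, StrictMono φ ∧ ∃ Γ : Fin m → Set (EuclideanSpace ℝ (Fin d)),
      (∀ P : Fin m → Set (EuclideanSpace ℝ (Fin d)), IsClusterOf Γ P →
        ∃ t : EuclideanSpace ℝ (Fin d), ∃ Q, IsClusterOf Λ Q ∧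
          ∀ i, P i = (fun q => q + t) '' Q i) ∧
      Tendsto (fun k => multisetDist (fun i => (fun s => s - h (φ k)) '' Λ i) Γ)
        atTop (𝓝 0) :=
  stmt_2_general Λ hDel hFLC h
end

section
/- Let d ≥ 1, b > 0 and R ≥ b/2. Let S ⊆ B_R(0) be a subset of ℝ^d such that for every y ∈ ℝ^d with |y| ≤ R − b/2 the closed ball B_{b/2}(y) contains a point of S. If u ∈ ℝ^d is such that −u + S ⊆ B_R(0), then |u| ≤ b. -/
/-! Place `y` at distance `R - b/2` from the origin, on the side opposite to `u`, so that
`‖u - y‖ = ‖u‖ + R - b/2`. Some `s ∈ S` lies within `b/2` of `y`, and `‖s - u‖ ≤ R`, so the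
triangle inequality through `s` gives `‖u‖ + R - b/2 ≤ R + b/2`. -/

open Metric Set

theorem exists_norm_eq_and_norm_sub_eq_add {E : Type*} [NormedAddCommGroup E] [NormedSpace ℝ E]
    {u : E} (hu : u ≠ 0) {r : ℝ} (hr : 0 ≤ r) : ∃ y : E, ‖y‖ = r ∧ ‖u - y‖ = ‖u‖ + r := by
  set v := (r / ‖u‖) • u
  have hv : ‖v‖ = r := by
    rw [norm_smul, Real.norm_of_nonneg (by positivity), div_mul_cancel₀ _ (norm_ne_zero_iff.2 hu)]
  refine ⟨-v, by rwa [norm_neg], ?_⟩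
  rw [sub_neg_eq_add, (SameRay.sameRay_nonneg_smul_right u (by positivity)).norm_add, hv]

theorem stmt_3_general {d : ℕ} {b R : ℝ} (hb : 0 < b) (hR : b / 2 ≤ R)
    (S : Set (EuclideanSpace ℝ (Fin d)))
    (hdense : ∀ y : EuclideanSpace ℝ (Fin d), ‖y‖ ≤ R - b / 2 →
      ∃ s ∈ S, s ∈ closedBall y (b / 2))
    (u : EuclideanSpace ℝ (Fin d))
    (hu : (fun s => s - u) '' S ⊆ closedBall 0 R) :
    ‖u‖ ≤ b := by
  rcases eq_or_ne u 0 with rfl | hu0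
  · simpa using hb.le
  obtain ⟨y, hy, hyu⟩ := exists_norm_eq_and_norm_sub_eq_add hu0 (sub_nonneg.2 hR)
  obtain ⟨s, hsS, hsy⟩ := hdense y hy.le
  have hsu : ‖s - u‖ ≤ R := by simpa using hu (mem_image_of_mem _ hsS)
  rw [mem_closedBall, dist_eq_norm] at hsy
  have := norm_sub_le_norm_sub_add_norm_sub u s y
  rw [norm_sub_rev u s] at this
  linarith

/-- a nonempty `R`-patch of a point set whose support is relatively dense with
constant `b/2` cannot be translated by more than `b` and stay inside the window `B_R(0)`. -/
theorem stmt_3 {d : ℕ} (hd : 1 ≤ d) {b R : ℝ} (hb : 0 < b) (hR : b / 2 ≤ R)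
    (S : Set (EuclideanSpace ℝ (Fin d))) (hS : S ⊆ closedBall 0 R)
    (hdense : ∀ y : EuclideanSpace ℝ (Fin d), ‖y‖ ≤ R - b / 2 →
      ∃ s ∈ S, s ∈ closedBall y (b / 2))
    (u : EuclideanSpace ℝ (Fin d))
    (hu : (fun s => s - u) '' S ⊆ closedBall 0 R) :
    ‖u‖ ≤ b :=
  stmt_3_general hb hR S hdense u hu
end

section
/- Let d ≥ 1, η > 0, and let D ⊆ ℝ^d be a set any two distinct points of which are at Euclidean distance ≥ η. Let F ⊆ ℝ^d be a nonempty bounded set and let r ≥ η/2. Then the set D ∩ (F^{+r} \ F^{−r}) is finite and #(D ∩ (F^{+r} \ F^{−r})) · Vol(B_{η/2}(0)) ≤ Vol((∂F)^{+2r}), where Vol denotes Lebesgue measure. -/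
open Metric Set MeasureTheory

/-- `F^{+r} = {x : dist(x,F) ≤ r}`. -/
def plusR {d : ℕ} (F : Set (EuclideanSpace ℝ (Fin d))) (r : ℝ) :
    Set (EuclideanSpace ℝ (Fin d)) :=
  {x | infDist x F ≤ r}

/-- `F^{-r} = {x ∈ F : dist(x,∂F) ≥ r}`. -/
def minusR {d : ℕ} (F : Set (EuclideanSpace ℝ (Fin d))) (r : ℝ) :
    Set (EuclideanSpace ℝ (Fin d)) :=
  {x ∈ F | r ≤ infDist x (frontier F)}

/-!
A point of `F^{+r} \ F^{-r}` lies within `r` of `∂F`: inside `F` by definition of `F^{-r}`,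
outside `F` because the segment to a nearby point of `F` crosses `∂F`. Hence the open balls of
radius `η/2` around the points of `D` in the annulus lie in `(∂F)^{+2r}`, and they are pairwise
disjoint by the separation of `D`; comparing volumes gives the bound. Finiteness holds because
the annulus is bounded and a totally bounded separated set is finite.
-/

theorem IsPreconnected.inter_frontier_nonempty {X : Type*} [TopologicalSpace X] {s t : Set X}
    (hs : IsPreconnected s) (hst : (s ∩ t).Nonempty) (hst' : (s \ t).Nonempty) :
    (s ∩ frontier t).Nonempty := by
  by_contra! h
  have hcover : s ⊆ interior t ∪ (closure t)ᶜ := by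
    intro w hw
    by_cases hwt : w ∈ closure t
    · rw [closure_eq_interior_union_frontier] at hwt
      exact hwt.elim Or.inl fun hwf => (h.subset ⟨hw, hwf⟩).elim
    · exact Or.inr hwt
  obtain ⟨z, hzs, hzt⟩ := hst
  obtain ⟨x, hxs, hxt⟩ := hst'
  have hz : z ∈ interior t :=
    (hcover hzs).resolve_right fun hz => hz (subset_closure hzt)
  have hx : x ∈ (closure t)ᶜ :=
    (hcover hxs).resolve_left fun hx => hxt (interior_subset hx)
  obtain ⟨w, -, hwi, hwc⟩ := hs _ _ isOpen_interior isClosed_closure.isOpen_compl hcover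
    ⟨z, hzs, hz⟩ ⟨x, hxs, hx⟩
  exact hwc (subset_closure (interior_subset hwi))

theorem infDist_frontier_le_infDist {E : Type*} [NormedAddCommGroup E] [NormedSpace ℝ E]
    {s : Set E} {x : E} (hx : x ∉ s) : infDist x (frontier s) ≤ infDist x s := by
  rcases s.eq_empty_or_nonempty with rfl | hs
  · simp
  refine (le_infDist hs).2 fun z hz => ?_
  obtain ⟨w, hw, hwfr⟩ := (convex_segment x z).isPreconnected.inter_frontier_nonempty
    ⟨z, right_mem_segment ℝ x z, hz⟩ ⟨x, left_mem_segment ℝ x z, hx⟩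
  calc infDist x (frontier s) ≤ dist x w := infDist_le_dist_of_mem hwfr
    _ ≤ dist x z := by linarith [dist_add_dist_of_mem_segment hw, dist_nonneg (x := w) (y := z)]

theorem TotallyBounded.finite_of_pairwise_le_dist {X : Type*} [PseudoMetricSpace X] {s : Set X}
    (hs : TotallyBounded s) {η : ℝ} (hη : 0 < η) (hsep : s.Pairwise (η ≤ dist · ·)) :
    s.Finite := by
  obtain ⟨t, ht, hcover⟩ := totallyBounded_iff.1 hs (η / 2) (half_pos hη)
  have hsub : s ⊆ ⋃ y ∈ t, s ∩ ball y (η / 2) := fun x hx => by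
    obtain ⟨y, hy, hxy⟩ := mem_iUnion₂.1 (hcover hx)
    exact mem_iUnion₂.2 ⟨y, hy, hx, hxy⟩
  refine (ht.biUnion fun y _ => Subsingleton.finite ?_).subset hsub
  intro a ha b hb
  by_contra hab
  have := hsep ha.1 hb.1 hab
  linarith [dist_triangle_right a b y, mem_ball.1 ha.2, mem_ball.1 hb.2]

theorem Set.Finite.ncard_mul_addHaar_ball_le {E : Type*} [NormedAddCommGroup E]
    [MeasurableSpace E] [BorelSpace E] (μ : Measure E) [μ.IsAddHaarMeasure] {s : Set E}
    (hs : s.Finite) {ρ : ℝ} (hsep : s.Pairwise (2 * ρ ≤ dist · ·)) {A : Set E}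
    (hA : ∀ x ∈ s, ball x ρ ⊆ A) :
    s.ncard * μ (ball 0 ρ) ≤ μ A := by
  lift s to Finset E using hs
  have hdisj : (s : Set E).PairwiseDisjoint (ball · ρ) :=
    hsep.mono' fun x y h => ball_disjoint_ball (by linarith)
  calc (s : Set E).ncard * μ (ball 0 ρ) = ∑ x ∈ s, μ (ball x ρ) := by
        simp [Measure.addHaar_ball_center]
    _ = μ (⋃ x ∈ s, ball x ρ) :=
        (measure_biUnion_finset hdisj fun _ _ => measurableSet_ball).symm
    _ ≤ μ A := measure_mono (iUnion₂_subset hA)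

section Annulus

variable {d : ℕ} {F : Set (EuclideanSpace ℝ (Fin d))} {r : ℝ}

theorem infDist_frontier_le_of_mem_plusR_diff_minusR {x : EuclideanSpace ℝ (Fin d)}
    (hx : x ∈ plusR F r \ minusR F r) : infDist x (frontier F) ≤ r := by
  by_cases hxF : x ∈ F
  · exact (not_le.1 fun h => hx.2 ⟨hxF, h⟩).le
  · exact (infDist_frontier_le_infDist hxF).trans hx.1

theorem Bornology.IsBounded.plusR (hFne : F.Nonempty) (hFb : Bornology.IsBounded F) :
    Bornology.IsBounded (plusR F r) :=
  (hFb.thickening (δ := r + 1)).subset fun x hx =>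
    (mem_thickening_iff_infDist_lt hFne).2 (by linarith [show infDist x F ≤ r from hx])

end Annulus

/-- an `η`-uniformly-discrete set meets the boundary annulus
`F^{+r} \ F^{-r}` in a finite set whose cardinality, times the volume of a ball of
radius `η/2`, is at most the volume of `(∂F)^{+2r}`. -/
theorem stmt_4 {d : ℕ} (hd : 1 ≤ d) {η : ℝ} (hη : 0 < η)
    (D : Set (EuclideanSpace ℝ (Fin d)))
    (hD : ∀ x ∈ D, ∀ y ∈ D, x ≠ y → η ≤ dist x y)
    (F : Set (EuclideanSpace ℝ (Fin d))) (hFne : F.Nonempty)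
    (hFb : Bornology.IsBounded F) {r : ℝ} (hr : η / 2 ≤ r) :
    (D ∩ (plusR F r \ minusR F r)).Finite ∧
    (D ∩ (plusR F r \ minusR F r)).ncard *
        volume (closedBall (0 : EuclideanSpace ℝ (Fin d)) (η / 2))
      ≤ volume (plusR (frontier F) (2 * r)) := by
  set S := D ∩ (plusR F r \ minusR F r)
  have hsep : S.Pairwise (η ≤ dist · ·) := fun x hx y hy => hD x hx.1 y hy.1
  have hSb : Bornology.IsBounded S :=
    (hFb.plusR (r := r) hFne).subset fun x hx => hx.2.1
  have hSfin : S.Finite :=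
    (hSb.isCompact_closure.totallyBounded.subset subset_closure).finite_of_pairwise_le_dist hη hsep
  refine ⟨hSfin, ?_⟩
  have : Nontrivial (EuclideanSpace ℝ (Fin d)) :=
    Module.nontrivial_of_finrank_pos (R := ℝ) (by rwa [finrank_euclideanSpace_fin])
  rw [Measure.addHaar_closedBall_eq_addHaar_ball]
  refine hSfin.ncard_mul_addHaar_ball_le volume (by simpa [mul_div_cancel₀] using hsep)
    fun x hx y hy => ?_
  calc infDist y (frontier F) ≤ infDist x (frontier F) + dist y x := infDist_le_infDist_add_dist
    _ ≤ r + η / 2 := add_le_add (infDist_frontier_le_of_mem_plusR_diff_minusR hx.2)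
        (mem_ball.1 hy).le
    _ ≤ 2 * r := by linarith
end

section
/- Let d ≥ 1, let V ⊆ ℝ^d be a bounded measurable set, let r ≥ sup{|v| : v ∈ V}, let D ⊆ ℝ^d be a countable set such that the translates {x + V : x ∈ D} are pairwise disjoint, and let F ⊆ ℝ^d be a bounded measurable set. Then Vol(V) · #(D ∩ F^{−r}) ≤ Vol(⋃_{x∈D} (F ∩ (x+V))) ≤ Vol(V) · #(D ∩ F^{+r}), where the cardinalities are taken in ℕ∪{∞} and the inequalities hold in [0,∞]. -/
open Metric Set MeasureTheory ENNReal

/-!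
Every translate `x + V` has the volume of `V`, and since the translates are disjoint the volume of
a union of them is `Vol(V)` times the number of translates. If `x + V` meets `F` then
`dist(x, F) ≤ r`, so the union is covered by the translates with `x ∈ D ∩ F^{+r}`. Conversely, for
`x ∈ F^{-r}` the open ball `B(x, r)` misses `∂F` and contains `x ∈ F`, so by connectedness it lies
in `F`; hence `x + V ⊆ F` up to the sphere `∂B(x, r)`, which is null.
-/

theorem measure_biUnion_image_add_left {G : Type*} [AddGroup G] [MeasurableSpace G]
    [MeasurableAdd G] (μ : Measure G) [μ.IsAddLeftInvariant] {V S : Set G}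
    (hV : MeasurableSet V) (hS : S.Countable)
    (hdisj : S.PairwiseDisjoint fun x => (x + ·) '' V) :
    μ (⋃ x ∈ S, (x + ·) '' V) = μ V * S.encard := by
  have hmeas : ∀ x ∈ S, MeasurableSet ((x + ·) '' V) := fun x _ => by
    rw [image_add_left]
    exact hV.preimage (measurable_const_add _)
  rw [measure_biUnion hS hdisj hmeas]
  simp_rw [image_add_left, measure_preimage_add]
  rw [ENNReal.tsum_set_const, mul_comm]

theorem subset_closedBall_of_sSup_norm_le {E : Type*} [SeminormedAddCommGroup E] {V : Set E}
    (hV : Bornology.IsBounded V) {r : ℝ} (hr : sSup ((‖·‖) '' V) ≤ r) :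
    V ⊆ closedBall 0 r := by
  obtain ⟨R, hR⟩ := hV.exists_norm_le
  have hbdd : BddAbove ((‖·‖) '' V) := ⟨R, by rintro _ ⟨v, hv, rfl⟩; exact hR v hv⟩
  intro v hv
  rw [mem_closedBall_zero_iff]
  exact (le_csSup hbdd (mem_image_of_mem _ hv)).trans hr

theorem ball_subset_interior_of_le_infDist_frontier {E : Type*} [NormedAddCommGroup E]
    [NormedSpace ℝ E] {F : Set E} {x : E} {r : ℝ} (hx : x ∈ F)
    (hr : r ≤ infDist x (frontier F)) : ball x r ⊆ interior F := by
  rcases le_or_gt r 0 with hr0 | hr0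
  · simp [ball_eq_empty.2 hr0]
  have h_not_frontier : ∀ y ∈ ball x r, y ∉ frontier F := fun y hy hyF =>
    (hr.trans (infDist_le_dist_of_mem hyF)).not_gt (mem_ball'.1 hy)
  have h_interior : ∀ y ∈ ball x r, y ∈ closure F → y ∈ interior F := fun y hy hyF => by
    rw [closure_eq_interior_union_frontier] at hyF
    exact hyF.resolve_right (h_not_frontier y hy)
  refine (convex_ball x r).isPreconnected.subset_of_closure_inter_subset isOpen_interior
    ⟨x, mem_ball_self hr0, h_interior x (mem_ball_self hr0) (subset_closure hx)⟩ ?_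
  rintro y ⟨hyc, hy⟩
  exact h_interior y hy (closure_mono interior_subset hyc)

theorem image_add_subset_union_sphere {E : Type*} [NormedAddCommGroup E] [NormedSpace ℝ E]
    {F V : Set E} {x : E} {r : ℝ} (hx : x ∈ F) (hr : r ≤ infDist x (frontier F))
    (hV : V ⊆ closedBall 0 r) :
    (x + ·) '' V ⊆ (F ∩ (x + ·) '' V) ∪ sphere x r := by
  rintro _ ⟨v, hv, rfl⟩
  have hv' := mem_closedBall_zero_iff.1 (hV hv)
  rcases hv'.lt_or_eq with hlt | heq
  · refine Or.inl ⟨interior_subset (ball_subset_interior_of_le_infDist_frontier hx hr ?_),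
      mem_image_of_mem _ hv⟩
    simpa [mem_ball, dist_eq_norm] using hlt
  · right
    simpa [mem_sphere, dist_eq_norm] using heq

theorem infDist_le_of_inter_image_add_nonempty {E : Type*} [SeminormedAddCommGroup E]
    {F V : Set E} {x : E} {r : ℝ} (hV : V ⊆ closedBall 0 r)
    (hne : (F ∩ (x + ·) '' V).Nonempty) : infDist x F ≤ r := by
  obtain ⟨_, hyF, v, hv, rfl⟩ := hne
  calc infDist x F ≤ dist x (x + v) := infDist_le_dist_of_mem hyF
    _ = ‖v‖ := by rw [dist_self_add_right]
    _ ≤ r := mem_closedBall_zero_iff.1 (hV hv)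

section Packing

variable {d : ℕ} {V D : Set (EuclideanSpace ℝ (Fin d))} {r : ℝ}

theorem volume_mul_encard_minusR_le [Nonempty (Fin d)] (hVm : MeasurableSet V)
    (hVr : V ⊆ closedBall 0 r) (hDc : D.Countable)
    (hdisj : D.PairwiseDisjoint fun x => (x + ·) '' V) (F : Set (EuclideanSpace ℝ (Fin d))) :
    volume V * (D ∩ minusR F r).encard ≤ volume (⋃ x ∈ D, F ∩ (x + ·) '' V) := by
  set T := D ∩ minusR F r
  have hTc : T.Countable := hDc.mono inter_subset_left
  have hcover : (⋃ x ∈ T, (x + ·) '' V) ⊆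
      (⋃ x ∈ D, F ∩ (x + ·) '' V) ∪ ⋃ x ∈ T, sphere x r := by
    refine iUnion₂_subset fun x hx => ?_
    refine (image_add_subset_union_sphere hx.2.1 hx.2.2 hVr).trans (union_subset_union ?_ ?_)
    · exact subset_biUnion_of_mem (u := fun x => F ∩ (x + ·) '' V) hx.1
    · exact subset_biUnion_of_mem (u := fun x => sphere x r) hx
  have hspheres : volume (⋃ x ∈ T, sphere x r) = 0 :=
    (measure_biUnion_null_iff hTc).2 fun x _ => Measure.addHaar_sphere volume x r
  calc volume V * T.encard
      = volume (⋃ x ∈ T, (x + ·) '' V) :=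
        (measure_biUnion_image_add_left volume hVm hTc (hdisj.subset inter_subset_left)).symm
    _ ≤ volume (⋃ x ∈ D, F ∩ (x + ·) '' V) + volume (⋃ x ∈ T, sphere x r) :=
        (measure_mono hcover).trans (measure_union_le _ _)
    _ = volume (⋃ x ∈ D, F ∩ (x + ·) '' V) := by rw [hspheres, add_zero]

theorem volume_le_mul_encard_plusR (hVm : MeasurableSet V) (hVr : V ⊆ closedBall 0 r)
    (hDc : D.Countable) (hdisj : D.PairwiseDisjoint fun x => (x + ·) '' V)
    (F : Set (EuclideanSpace ℝ (Fin d))) :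
    volume (⋃ x ∈ D, F ∩ (x + ·) '' V) ≤ volume V * (D ∩ plusR F r).encard := by
  set S := D ∩ plusR F r
  have hcover : (⋃ x ∈ D, F ∩ (x + ·) '' V) ⊆ ⋃ x ∈ S, (x + ·) '' V := by
    refine iUnion₂_subset fun x hx y hy => ?_
    have hxS : x ∈ S := ⟨hx, infDist_le_of_inter_image_add_nonempty hVr ⟨y, hy⟩⟩
    exact mem_biUnion hxS hy.2
  calc volume (⋃ x ∈ D, F ∩ (x + ·) '' V)
      ≤ volume (⋃ x ∈ S, (x + ·) '' V) := measure_mono hcover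
    _ = volume V * S.encard := measure_biUnion_image_add_left volume hVm
        (hDc.mono inter_subset_left) (hdisj.subset inter_subset_left)

end Packing

theorem stmt_5_general {d : ℕ} (hd : 1 ≤ d)
    (V : Set (EuclideanSpace ℝ (Fin d))) (hVb : Bornology.IsBounded V)
    (hVm : MeasurableSet V)
    {r : ℝ} (hr : sSup ((fun v => ‖v‖) '' V) ≤ r)
    (D : Set (EuclideanSpace ℝ (Fin d))) (hDc : D.Countable)
    (hdisj : D.PairwiseDisjoint fun x => (fun v => x + v) '' V)
    (F : Set (EuclideanSpace ℝ (Fin d))) :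
    volume V * ((D ∩ minusR F r).encard : ℝ≥0∞)
        ≤ volume (⋃ x ∈ D, F ∩ ((fun v => x + v) '' V)) ∧
      volume (⋃ x ∈ D, F ∩ ((fun v => x + v) '' V))
        ≤ volume V * ((D ∩ plusR F r).encard : ℝ≥0∞) := by
  have : Nonempty (Fin d) := ⟨⟨0, hd⟩⟩
  have hVr := subset_closedBall_of_sSup_norm_le hVb hr
  exact ⟨volume_mul_encard_minusR_le hVm hVr hDc hdisj F,
    volume_le_mul_encard_plusR hVm hVr hDc hdisj F⟩

/-- for pairwise disjoint translates `x + V` (`x ∈ D`) and a bounded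
measurable `F`, `Vol(V)·#(D ∩ F^{-r}) ≤ Vol(⋃_{x∈D} (F ∩ (x+V))) ≤ Vol(V)·#(D ∩ F^{+r})`,
where `r` bounds the norms of elements of `V`; cardinalities are `encard ∈ ℕ∞`. -/
theorem stmt_5 {d : ℕ} (hd : 1 ≤ d)
    (V : Set (EuclideanSpace ℝ (Fin d))) (hVb : Bornology.IsBounded V)
    (hVm : MeasurableSet V)
    {r : ℝ} (hr : sSup ((fun v => ‖v‖) '' V) ≤ r)
    (D : Set (EuclideanSpace ℝ (Fin d))) (hDc : D.Countable)
    (hdisj : D.PairwiseDisjoint fun x => (fun v => x + v) '' V)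
    (F : Set (EuclideanSpace ℝ (Fin d))) (hFb : Bornology.IsBounded F)
    (hFm : MeasurableSet F) :
    volume V * ((D ∩ minusR F r).encard : ℝ≥0∞)
        ≤ volume (⋃ x ∈ D, F ∩ ((fun v => x + v) '' V)) ∧
      volume (⋃ x ∈ D, F ∩ ((fun v => x + v) '' V))
        ≤ volume V * ((D ∩ plusR F r).encard : ℝ≥0∞) :=
  stmt_5_general hd V hVb hVm hr D hDc hdisj F
end

section
/- Let X be a compact metric space equipped with a continuous action of (ℝ^d,+), written (g,Γ) ↦ −g+Γ, which is uniquely ergodic with unique invariant Borel probability measure μ, and let {F_n} be a van Hove sequence in ℝ^d. Then for every continuous f : X → ℂ, every x ∈ ℝ^d and every Γ ∈ X, lim_{n→∞} (1/Vol(F_n)) ∫_{F_n} f(−x−y+Γ) · conj(f(−y+Γ)) dy = ∫_X f(−x+Γ′) · conj(f(Γ′)) dμ(Γ′). -/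
/-!
The orbit averages `νₙ = (Vol Fₙ)⁻¹ ∫_{Fₙ} δ_{y + Γ} dy` are probability measures on `X`.
Translating `Fₙ` by `t` only changes it inside the `‖t‖`-neighbourhood of `∂Fₙ`, so by the van Hove
property the `νₙ` are asymptotically invariant, and every weak limit point of them is an invariant
probability measure, hence equals `μ` by unique ergodicity. Since the probability measures on a
compact space form a compact set, `νₙ → μ` weakly; integrating the continuous function
`Γ' ↦ f(x + Γ') · conj (f Γ')` against `νₙ` gives the claim.
-/

open Metric Set Filter MeasureTheory Topology

/-- A van Hove sequence: nonempty bounded measurable sets of positive volume with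
`Vol((∂Fₙ)^{+r})/Vol(Fₙ) → 0` for every `r > 0`. -/
def IsVanHove {d : ℕ} (F : ℕ → Set (EuclideanSpace ℝ (Fin d))) : Prop :=
  (∀ n, (F n).Nonempty ∧ Bornology.IsBounded (F n) ∧ MeasurableSet (F n) ∧
      0 < volume (F n)) ∧
  ∀ r > (0 : ℝ),
    Tendsto (fun n => volume {x | infDist x (frontier (F n)) ≤ r} / volume (F n))
      atTop (𝓝 0)

open scoped Pointwise symmDiff ENNReal BoundedContinuousFunction

section Frontier

variable {E : Type*} [NormedAddCommGroup E] [NormedSpace ℝ E]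

theorem infDist_frontier_le_dist {B : Set E} {x y : E} (hy : y ∈ B) (hx : x ∉ B) :
    infDist x (frontier B) ≤ dist x y := by
  have : PreconnectedSpace (segment ℝ x y) :=
    isPreconnected_iff_preconnectedSpace.1 (convex_segment x y).isPreconnected
  obtain ⟨z, hz⟩ : (frontier (((↑) : segment ℝ x y → E) ⁻¹' B)).Nonempty :=
    nonempty_frontier_iff.2 ⟨⟨⟨y, right_mem_segment ℝ x y⟩, hy⟩,
      ne_univ_iff_exists_notMem _ |>.2 ⟨⟨x, left_mem_segment ℝ x y⟩, hx⟩⟩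
  calc infDist x (frontier B) ≤ dist x z :=
        infDist_le_dist_of_mem (continuous_subtype_val.frontier_preimage_subset B hz)
    _ ≤ dist x y := by
      linarith [dist_add_dist_of_mem_segment z.2, dist_nonneg (x := (z : E)) (y := y)]

theorem vadd_symmDiff_subset_infDist_frontier_le (B : Set E) (t : E) :
    (t +ᵥ B) ∆ B ⊆ {x | infDist x (frontier B) ≤ ‖t‖} := by
  have hdist : ∀ x : E, dist x (-t +ᵥ x) = ‖t‖ := fun x => by simp [dist_eq_norm]
  rintro x (⟨hxt, hx⟩ | ⟨hx, hxt⟩) <;> rw [mem_vadd_set_iff_neg_vadd_mem] at hxt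
  · exact hdist x ▸ infDist_frontier_le_dist hxt hx
  · simpa [frontier_compl, hdist x] using
      infDist_frontier_le_dist (B := Bᶜ) hxt (not_not_intro hx)

end Frontier

theorem IsVanHove.isAddFoelner {d : ℕ} {F : ℕ → Set (EuclideanSpace ℝ (Fin d))}
    (hF : IsVanHove F) : IsAddFoelner (EuclideanSpace ℝ (Fin d)) volume atTop F where
  eventually_measurableSet := .of_forall fun n => (hF.1 n).2.2.1
  eventually_meas_ne_zero := .of_forall fun n => (hF.1 n).2.2.2.ne'
  eventually_meas_ne_top := .of_forall fun n => (hF.1 n).2.1.measure_lt_top.ne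
  tendsto_meas_vadd_symmDiff t := by
    refine tendsto_of_tendsto_of_tendsto_of_le_of_le tendsto_const_nhds
      (hF.2 (‖t‖ + 1) (by positivity)) (fun _ => zero_le) fun n => ?_
    refine ENNReal.div_le_div_right (measure_mono fun x hx => ?_) _
    have := vadd_symmDiff_subset_infDist_frontier_le (F n) t hx
    simp only [mem_ofPred_eq] at this ⊢
    linarith

theorem norm_setIntegral_sub_setIntegral_le {α E : Type*} [MeasurableSpace α]
    [NormedAddCommGroup E] [NormedSpace ℝ E] {μ : Measure α} {f : α → E} {C : ℝ}
    {s t : Set α} (hs : MeasurableSet s) (ht : MeasurableSet t) (hsμ : μ s ≠ ∞)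
    (htμ : μ t ≠ ∞) (hfm : AEStronglyMeasurable f μ) (hf : ∀ x, ‖f x‖ ≤ C) :
    ‖∫ x in s, f x ∂μ - ∫ x in t, f x ∂μ‖ ≤ C * μ.real (s ∆ t) := by
  have hint : ∀ u, μ u ≠ ∞ → IntegrableOn f u μ := fun u hu =>
    Measure.integrableOn_of_bounded hu hfm (.of_forall hf)
  have hsplit : ∫ x in s, f x ∂μ - ∫ x in t, f x ∂μ =
      ∫ x in s \ t, f x ∂μ - ∫ x in t \ s, f x ∂μ := by
    rw [← integral_inter_add_sdiff ht (hint s hsμ), ← integral_inter_add_sdiff hs (hint t htμ),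
      inter_comm]
    abel
  have hbound : ∀ u, μ u ≠ ∞ → ‖∫ x in u, f x ∂μ‖ ≤ C * μ.real u := fun u hu =>
    norm_setIntegral_le_of_norm_le_const hu.lt_top fun x _ => hf x
  rw [hsplit, measureReal_symmDiff_eq hs ht, mul_add]
  exact (norm_sub_le _ _).trans (add_le_add
    (hbound _ (ne_top_of_le_ne_top hsμ (measure_mono sdiff_subset)))
    (hbound _ (ne_top_of_le_ne_top htμ (measure_mono sdiff_subset))))

section OrbitAverage

open ProbabilityTheory

variable {G X : Type*} [AddGroup G] [TopologicalSpace G] [MeasurableSpace G]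
  [OpensMeasurableSpace G] [TopologicalSpace X] [MeasurableSpace X] [BorelSpace X]
  [AddAction G X] [ContinuousVAdd G X]

noncomputable def orbitAverage (μ : Measure G) (s : Set G) (x : X) : FiniteMeasure X :=
  ⟨(μ[|s]).map (· +ᵥ x), inferInstance⟩

theorem orbitAverage_mass {μ : Measure G} {s : Set G} (hs₀ : μ s ≠ 0) (hs : μ s ≠ ∞) (x : X) :
    (orbitAverage μ s x).mass = 1 := by
  have := cond_isProbabilityMeasure_of_finite hs₀ hs
  have := Measure.isProbabilityMeasure_map (μ := μ[|s])
    (by fun_prop : Continuous fun g : G => g +ᵥ x).aemeasurable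
  simp [FiniteMeasure.mass, orbitAverage]

theorem integral_orbitAverage {E : Type*} [NormedAddCommGroup E] [NormedSpace ℝ E]
    (μ : Measure G) (s : Set G) (x : X) {φ : X → E} (hφ : StronglyMeasurable φ) :
    ∫ z, φ z ∂(orbitAverage μ s x) = (μ s).toReal⁻¹ • ∫ g in s, φ (g +ᵥ x) ∂μ := by
  rw [orbitAverage, FiniteMeasure.toMeasure_mk,
    integral_map
      (by fun_prop : Continuous fun g : G => g +ᵥ x).aemeasurable hφ.aestronglyMeasurable,
    ProbabilityTheory.cond, integral_smul_measure, ENNReal.toReal_inv]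

end OrbitAverage

namespace IsAddFoelner

variable {G X : Type*} [AddGroup G] [TopologicalSpace G] [MeasurableSpace G]
  [OpensMeasurableSpace G] [MeasurableAdd G] [MetricSpace X] [MeasurableSpace X] [BorelSpace X]
  [AddAction G X] [ContinuousVAdd G X] {μ : Measure G} [μ.IsAddLeftInvariant]
  {ι : Type*} {l : Filter ι} {F : ι → Set G}

theorem tendsto_integral_vadd_sub_integral (hF : IsAddFoelner G μ l F) (x : X)
    (φ : X →ᵇ ℝ) (t : G) :
    Tendsto (fun i => ∫ z, φ (t +ᵥ z) ∂(orbitAverage μ (F i) x) -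
      ∫ z, φ z ∂(orbitAverage μ (F i) x)) l (𝓝 0) := by
  have hbound : ∀ i, MeasurableSet (F i) → μ (F i) ≠ ∞ →
      ‖∫ z, φ (t +ᵥ z) ∂(orbitAverage μ (F i) x) - ∫ z, φ z ∂(orbitAverage μ (F i) x)‖ ≤
        ‖φ‖ * (μ ((t +ᵥ F i) ∆ F i) / μ (F i)).toReal := by
    intro i hmeas hfin
    have htranslate : ∫ g in F i, φ (t +ᵥ (g +ᵥ x)) ∂μ = ∫ g in t +ᵥ F i, φ (g +ᵥ x) ∂μ := by
      simp only [← image_vadd, vadd_eq_add]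
      rw [(measurePreserving_add_left μ t).setIntegral_image_emb (measurableEmbedding_addLeft t)]
      simp only [vadd_vadd]
    have hdiff := norm_setIntegral_sub_setIntegral_le (f := fun g => φ (g +ᵥ x))
      (hmeas.const_vadd t) hmeas (by rwa [measure_vadd]) hfin
      (φ.continuous.comp (by fun_prop : Continuous fun g : G => g +ᵥ x)).aestronglyMeasurable
      (φ.norm_coe_le_norm <| · +ᵥ x)
    rw [integral_orbitAverage (φ := fun z => φ (t +ᵥ z)) _ _ _
        (φ.continuous.comp (continuous_const_vadd t)).stronglyMeasurable,
      integral_orbitAverage _ _ _ φ.continuous.stronglyMeasurable,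
      ← smul_sub, htranslate, norm_smul, ENNReal.toReal_div, Real.norm_of_nonneg (by positivity)]
    calc (μ (F i)).toReal⁻¹ * ‖∫ g in t +ᵥ F i, φ (g +ᵥ x) ∂μ - ∫ g in F i, φ (g +ᵥ x) ∂μ‖
        ≤ (μ (F i)).toReal⁻¹ * (‖φ‖ * μ.real ((t +ᵥ F i) ∆ F i)) := by gcongr
      _ = ‖φ‖ * ((μ ((t +ᵥ F i) ∆ F i)).toReal / (μ (F i)).toReal) := by
        rw [measureReal_def]; ring
  have hlim : Tendsto (fun i => ‖φ‖ * (μ ((t +ᵥ F i) ∆ F i) / μ (F i)).toReal) l (𝓝 0) := by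
    simpa using ((ENNReal.tendsto_toReal ENNReal.zero_ne_top).comp
      (hF.tendsto_meas_vadd_symmDiff t)).const_mul ‖φ‖
  refine squeeze_zero_norm' ?_ hlim
  filter_upwards [hF.eventually_measurableSet, hF.eventually_meas_ne_top] with i using hbound i

theorem map_vadd_eq_of_mapClusterPt (hF : IsAddFoelner G μ l F) {x : X} {ν : FiniteMeasure X}
    (hν : MapClusterPt ν l fun i => orbitAverage μ (F i) x) (t : G) :
    (ν : Measure X).map (t +ᵥ ·) = ν := by
  refine ext_of_forall_integral_eq_of_IsFiniteMeasure fun φ => ?_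
  obtain ⟨U, hUl, hU⟩ := mapClusterPt_iff_ultrafilter.1 hν
  let φt : X →ᵇ ℝ := φ.compContinuous ⟨(t +ᵥ ·), continuous_const_vadd t⟩
  have hcont : Continuous fun ν : FiniteMeasure X => ∫ z, φt z ∂ν - ∫ z, φ z ∂ν := by fun_prop
  have hzero := tendsto_nhds_unique ((hcont.tendsto ν).comp hU)
    ((hF.tendsto_integral_vadd_sub_integral x φ t).mono_left hUl)
  rw [integral_map (continuous_const_vadd t).aemeasurable φ.continuous.aestronglyMeasurable]
  exact sub_eq_zero.1 hzero

theorem tendsto_orbitAverage [CompactSpace X] (hF : IsAddFoelner G μ l F) (x : X)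
    (ν : Measure X) [IsProbabilityMeasure ν]
    (huniq : ∀ ν' : Measure X, IsProbabilityMeasure ν' →
      (∀ g : G, ν'.map (g +ᵥ ·) = ν') → ν' = ν) :
    Tendsto (fun i => orbitAverage μ (F i) x) l (𝓝 ⟨ν, inferInstance⟩) := by
  refine (isCompact_setOfPred_finiteMeasure_eq_of_compactSpace X 1)
    |>.tendsto_nhds_of_unique_mapClusterPt ?_
      fun ν' (hν' : ν'.mass = 1) hclu => FiniteMeasure.toMeasure_injective ?_
  · filter_upwards [hF.eventually_meas_ne_zero, hF.eventually_meas_ne_top] with i h₀ h using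
      orbitAverage_mass h₀ h x
  · have : IsProbabilityMeasure (ν' : Measure X) :=
      ⟨by rw [← FiniteMeasure.ennreal_mass, hν', ENNReal.coe_one]⟩
    exact huniq ν' this (hF.map_vadd_eq_of_mapClusterPt hclu)

end IsAddFoelner

/-- `g +ᵥ Γ` stands for the paper's `-g + Γ`. -/
theorem stmt_10_general {d : ℕ} {X : Type*} [MetricSpace X] [CompactSpace X]
    [MeasurableSpace X] [BorelSpace X]
    [AddAction (EuclideanSpace ℝ (Fin d)) X]
    (hcont : Continuous fun p : EuclideanSpace ℝ (Fin d) × X => p.1 +ᵥ p.2)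
    (μ : Measure X) (hμp : IsProbabilityMeasure μ)
    (huniq : ∀ ν : Measure X, IsProbabilityMeasure ν →
      (∀ g : EuclideanSpace ℝ (Fin d), Measure.map (fun Γ => g +ᵥ Γ) ν = ν) → ν = μ)
    (F : ℕ → Set (EuclideanSpace ℝ (Fin d))) (hF : IsVanHove F) :
    ∀ f : C(X, ℂ), ∀ x : EuclideanSpace ℝ (Fin d), ∀ Γ : X,
      Tendsto
        (fun n => ((volume (F n)).toReal)⁻¹ •
          ∫ y in F n, f ((x + y) +ᵥ Γ) * (starRingEnd ℂ) (f (y +ᵥ Γ)))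
        atTop
        (𝓝 (∫ Γ', f (x +ᵥ Γ') * (starRingEnd ℂ) (f Γ') ∂μ)) := by
  intro f x Γ
  have : ContinuousVAdd (EuclideanSpace ℝ (Fin d)) X := ⟨hcont⟩
  let φ : X →ᵇ ℂ := .mkOfCompact (f.comp ⟨(x +ᵥ ·), continuous_const_vadd x⟩ * star f)
  have hlim := (FiniteMeasure.tendsto_iff_forall_integral_rclike_tendsto ℂ).1
    (hF.isAddFoelner.tendsto_orbitAverage Γ μ huniq) φ
  simp only [integral_orbitAverage _ _ _ φ.continuous.stronglyMeasurable] at hlim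
  simpa [φ, vadd_vadd] using hlim

/-- Dworkin's argument, main step: for a uniquely ergodic continuous action
of `ℝ^d` on a compact metric space (written `g +ᵥ Γ`, standing for `-g + Γ`), with unique
invariant probability measure `μ`, the averages of `y ↦ f(-x-y+Γ)·conj(f(-y+Γ))` over a
van Hove sequence converge to `∫ f(-x+Γ')·conj(f(Γ')) dμ(Γ')`. -/
theorem stmt_10 {d : ℕ} (hd : 1 ≤ d) {X : Type*} [MetricSpace X] [CompactSpace X]
    [MeasurableSpace X] [BorelSpace X]
    [AddAction (EuclideanSpace ℝ (Fin d)) X]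
    (hcont : Continuous fun p : EuclideanSpace ℝ (Fin d) × X => p.1 +ᵥ p.2)
    (μ : Measure X) (hμp : IsProbabilityMeasure μ)
    (hμinv : ∀ g : EuclideanSpace ℝ (Fin d), Measure.map (fun Γ => g +ᵥ Γ) μ = μ)
    (huniq : ∀ ν : Measure X, IsProbabilityMeasure ν →
      (∀ g : EuclideanSpace ℝ (Fin d), Measure.map (fun Γ => g +ᵥ Γ) ν = ν) → ν = μ)
    (F : ℕ → Set (EuclideanSpace ℝ (Fin d))) (hF : IsVanHove F) :
    ∀ f : C(X, ℂ), ∀ x : EuclideanSpace ℝ (Fin d), ∀ Γ : X,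
      Tendsto
        (fun n => ((volume (F n)).toReal)⁻¹ •
          ∫ y in F n, f ((x + y) +ᵥ Γ) * (starRingEnd ℂ) (f (y +ᵥ Γ)))
        atTop
        (𝓝 (∫ Γ', f (x +ᵥ Γ') * (starRingEnd ℂ) (f Γ') ∂μ)) :=
  stmt_10_general hcont μ hμp huniq F hF
end

section
/- Let m, d ≥ 1, let Γ = (Γ_i)_{i≤m} and P = (P_i)_{i≤m} be m-multisets in ℝ^d with each P_i finite and not all P_i empty, let V ⊆ ℝ^d be a bounded set, and let θ₁ be a real number with diam(V) ≤ θ₁ < 1. Assume: (a) for every family Q = (Q_i)_{i≤m} with Q_i ⊆ Γ_i for all i and every w ∈ ℝ^d, if ρ_H(Q_i, −w+P_i) ≤ θ₁ for all i ≤ m, then there exists u ∈ ℝ^d with Q_i = −u + P_i for all i; (b) for all u, w ∈ ℝ^d, if ρ_H(−u+P_i, −w+P_i) ≤ θ₁ for all i ≤ m, then u = w. If for every i ≤ m and every x ∈ P_i there exists v ∈ V with x − v ∈ Γ_i, then there exists a single v ∈ V such that −v + P_i ⊆ Γ_i for all i ≤ m. -/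
/-! If every `x ∈ Pᵢ` is moved into `Γᵢ` by some `v ∈ V`, the set `Qᵢ = Γᵢ ∩ (Pᵢ - V)` of all
such moved points is within `diam V` of the translate `-v₀ + Pᵢ` for any `v₀ ∈ V`. Hypothesis (a)
makes `Q` an exact translate `-u + P`, hence `-u + P` and `-v₀ + P` are `θ₁`-close, and (b)
forces `u = v₀`; so `-v₀ + Pᵢ = Qᵢ ⊆ Γᵢ`. -/

open Metric Set
open scoped Classical

/-- The (Hausdorff-type) distance `ρ_H` on (finite) point sets:
`max{max_{a∈A} dist(a,B), max_{b∈B} dist(b,A)}` for nonempty `A,B`; `1` if exactly one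
is empty; `0` if both are empty. -/
noncomputable def rhoH {d : ℕ} (A B : Set (EuclideanSpace ℝ (Fin d))) : ℝ :=
  if A = ∅ ∧ B = ∅ then 0
  else if A = ∅ ∨ B = ∅ then 1
  else sSup (((fun a => infDist a B) '' A) ∪ ((fun b => infDist b A) '' B))

open scoped Pointwise

section

variable {d : ℕ}

theorem rhoH_le_of_forall_exists_dist_le {A B : Set (EuclideanSpace ℝ (Fin d))} {θ : ℝ}
    (hθ : 0 ≤ θ) (hAB : ∀ a ∈ A, ∃ b ∈ B, dist a b ≤ θ)
    (hBA : ∀ b ∈ B, ∃ a ∈ A, dist a b ≤ θ) :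
    rhoH A B ≤ θ := by
  unfold rhoH
  by_cases hA : A = ∅
  · have hB : B = ∅ := eq_empty_of_forall_notMem fun b hb => by
      obtain ⟨a, ha, -⟩ := hBA b hb
      simp [hA] at ha
    simp [hA, hB, hθ]
  have hB : B ≠ ∅ := by
    obtain ⟨a, ha⟩ := nonempty_iff_ne_empty.mpr hA
    obtain ⟨b, hb, -⟩ := hAB a ha
    exact (nonempty_of_mem hb).ne_empty
  rw [if_neg (by tauto), if_neg (by tauto)]
  refine Real.sSup_le ?_ hθ
  rintro _ (⟨a, ha, rfl⟩ | ⟨b, hb, rfl⟩)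
  · obtain ⟨b, hb, hab⟩ := hAB a ha
    exact (infDist_le_dist_of_mem hb).trans hab
  · obtain ⟨a, ha, hab⟩ := hBA b hb
    exact (infDist_le_dist_of_mem ha).trans (dist_comm b a ▸ hab)

theorem rhoH_inter_sub_le_diam {Γ P V : Set (EuclideanSpace ℝ (Fin d))}
    (hV : Bornology.IsBounded V) {v₀ : EuclideanSpace ℝ (Fin d)} (hv₀ : v₀ ∈ V)
    (hP : ∀ x ∈ P, ∃ v ∈ V, x - v ∈ Γ) :
    rhoH (Γ ∩ (P - V)) ((fun p => p - v₀) '' P) ≤ diam V := by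
  have hclose : ∀ x, ∀ v ∈ V, dist (x - v) (x - v₀) ≤ diam V := fun x v hv =>
    dist_sub_left x v v₀ ▸ dist_le_diam_of_mem hV hv hv₀
  refine rhoH_le_of_forall_exists_dist_le diam_nonneg ?_ ?_
  · rintro _ ⟨-, x, hx, v, hv, rfl⟩
    exact ⟨x - v₀, mem_image_of_mem _ hx, hclose x v hv⟩
  · rintro _ ⟨x, hx, rfl⟩
    obtain ⟨v, hv, hvΓ⟩ := hP x hx
    exact ⟨x - v, ⟨hvΓ, sub_mem_sub hx hv⟩, hclose x v hv⟩

end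

theorem stmt_11_general {m d : ℕ}
    (Γ P : Fin m → Set (EuclideanSpace ℝ (Fin d)))
    (hPne : ∃ i, (P i).Nonempty)
    (V : Set (EuclideanSpace ℝ (Fin d))) (hVb : Bornology.IsBounded V)
    {θ₁ : ℝ} (hVd : diam V ≤ θ₁)
    (ha : ∀ Q : Fin m → Set (EuclideanSpace ℝ (Fin d)), (∀ i, Q i ⊆ Γ i) →
      ∀ w : EuclideanSpace ℝ (Fin d),
        (∀ i, rhoH (Q i) ((fun p => p - w) '' P i) ≤ θ₁) →
        ∃ u : EuclideanSpace ℝ (Fin d), ∀ i, Q i = (fun p => p - u) '' P i)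
    (hb : ∀ u w : EuclideanSpace ℝ (Fin d),
      (∀ i, rhoH ((fun p => p - u) '' P i) ((fun p => p - w) '' P i) ≤ θ₁) → u = w)
    (hx : ∀ i, ∀ x ∈ P i, ∃ v ∈ V, x - v ∈ Γ i) :
    ∃ v ∈ V, ∀ i, (fun p => p - v) '' P i ⊆ Γ i := by
  obtain ⟨i₀, x₀, hx₀⟩ := hPne
  obtain ⟨v₀, hv₀, -⟩ := hx i₀ x₀ hx₀
  have hQ : ∀ i, rhoH (Γ i ∩ (P i - V)) ((fun p => p - v₀) '' P i) ≤ θ₁ := fun i =>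
    (rhoH_inter_sub_le_diam hVb hv₀ (hx i)).trans hVd
  obtain ⟨u, hu⟩ := ha _ (fun i => inter_subset_left) v₀ hQ
  obtain rfl : u = v₀ := hb u v₀ fun i => hu i ▸ hQ i
  exact ⟨u, hv₀, fun i => hu i ▸ inter_subset_left⟩

/-- Lemma 3.5 of the paper: under the local rigidity hypotheses (a), (b)
coming from FLC, if each point `x` of the cluster `P` can be moved into `Γ` by some
`v = v(x) ∈ V` (i.e. `x - v ∈ Γᵢ`), with `diam V ≤ θ₁ < 1`, then a single `v ∈ V` works
for all of `P` simultaneously. -/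
theorem stmt_11 {m d : ℕ} (hm : 1 ≤ m) (hd : 1 ≤ d)
    (Γ P : Fin m → Set (EuclideanSpace ℝ (Fin d)))
    (hPfin : ∀ i, (P i).Finite) (hPne : ∃ i, (P i).Nonempty)
    (V : Set (EuclideanSpace ℝ (Fin d))) (hVb : Bornology.IsBounded V)
    {θ₁ : ℝ} (hVd : diam V ≤ θ₁) (hθ : θ₁ < 1)
    (ha : ∀ Q : Fin m → Set (EuclideanSpace ℝ (Fin d)), (∀ i, Q i ⊆ Γ i) →
      ∀ w : EuclideanSpace ℝ (Fin d),
        (∀ i, rhoH (Q i) ((fun p => p - w) '' P i) ≤ θ₁) →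
        ∃ u : EuclideanSpace ℝ (Fin d), ∀ i, Q i = (fun p => p - u) '' P i)
    (hb : ∀ u w : EuclideanSpace ℝ (Fin d),
      (∀ i, rhoH ((fun p => p - u) '' P i) ((fun p => p - w) '' P i) ≤ θ₁) → u = w)
    (hx : ∀ i, ∀ x ∈ P i, ∃ v ∈ V, x - v ∈ Γ i) :
    ∃ v ∈ V, ∀ i, (fun p => p - v) '' P i ⊆ Γ i :=
  stmt_11_general Γ P hPne V hVb hVd ha hb hx
end

section
/- Let Λ = (Λ_i)_{i≤m} be a Delone multiset in ℝ^d with finite local complexity which has uniform cluster frequencies relative to a van Hove sequence {F_n}, and let a_1,…,a_m ∈ ℂ. For i, j ≤ m, y ∈ Λ_i, z ∈ Λ_j, let P^{i,j}(y,z) denote the cluster of Λ whose i-th component contains y, whose j-th component contains z, and which has no other points. Then for every continuous compactly supported φ : ℝ^d → ℂ: (1) for each i, j, the frequency freq(P^{i,j}(y,z), Λ) depends only on i, j and the difference y − z, so one may write c_{ij}(w) = freq(P^{i,j}(y,z), Λ) for any y ∈ Λ_i, z ∈ Λ_j with y − z = w; (2) the set (Λ_i − Λ_j) ∩ supp(φ)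 is finite for all i, j; and (3) lim_{n→∞} (1/Vol(F_n)) Σ_{i,j≤m} a_i conj(a_j) Σ_{y ∈ Λ_i ∩ F_n} Σ_{z ∈ Λ_j ∩ F_n} φ(y−z) = Σ_{i,j≤m} a_i conj(a_j) Σ_{w ∈ (Λ_i − Λ_j) ∩ supp(φ)} c_{ij}(w) φ(w). -/
open Metric Set Filter MeasureTheory Topology
open scoped Pointwise

/-- `L_P(A) = #{x : x + Pᵢ ⊆ A ∩ Λᵢ for all i}`. -/
noncomputable def clusterCount {m d : ℕ} (Λ P : Fin m → Set (EuclideanSpace ℝ (Fin d)))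
    (A : Set (EuclideanSpace ℝ (Fin d))) : ℕ :=
  {x : EuclideanSpace ℝ (Fin d) | ∀ i, (fun p => x + p) '' P i ⊆ A ∩ Λ i}.ncard

/-- `Λ` has uniform cluster frequencies relative to `{Fₙ}`, with frequency function `freq`:
for every cluster `Q` of `Λ`, `L_Q(x+Fₙ)/Vol(Fₙ) → freq Q` uniformly in `x`. -/
def HasUCFWith {m d : ℕ} (Λ : Fin m → Set (EuclideanSpace ℝ (Fin d)))
    (F : ℕ → Set (EuclideanSpace ℝ (Fin d)))
    (freq : (Fin m → Set (EuclideanSpace ℝ (Fin d))) → ℝ) : Prop :=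
  ∀ Q : Fin m → Set (EuclideanSpace ℝ (Fin d)), (∀ i, Q i ⊆ Λ i ∧ (Q i).Finite) →
    TendstoUniformly
      (fun n x => (clusterCount Λ Q ((fun f => x + f) '' F n) : ℝ) / (volume (F n)).toReal)
      (fun _ => freq Q) atTop

/-- The two-point cluster `P^{i,j}(y,z)` whose `i`-th component contains `y`, whose `j`-th
component contains `z`, and which has no other points. -/
def twoPointCluster {m d : ℕ} (i j : Fin m) (y z : EuclideanSpace ℝ (Fin d)) :
    Fin m → Set (EuclideanSpace ℝ (Fin d)) :=
  fun k => (if k = i then {y} else ∅) ∪ (if k = j then {z} else ∅)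

/-! The occurrences of `P^{i,j}(y,z)` in `A` correspond bijectively to the pairs
`(u, v) ∈ (Λᵢ ∩ A) × (Λⱼ ∩ A)` with `u - v = y - z`, so their number, and hence the frequency,
depends only on `y - z`. Grouping `Σ_y Σ_z φ(y - z)` by the value `w = y - z` thus turns it into
`Σ_w L_{P_w}(Fₙ) φ(w)`. By FLC, every `w ∈ (Λᵢ - Λⱼ) ∩ supp φ` is of the form `u - c` with `c` one
of finitely many patch centres and `u ∈ Λᵢ` close to `c`, so this sum over `w` is finite, and
dividing by `Vol(Fₙ)` and applying UCF to each term gives the limit. -/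

theorem Set.Pairwise.finite_inter_of_isBounded {X : Type*} [PseudoMetricSpace X] [ProperSpace X]
    {s K : Set X} {r : ℝ} (hr : 0 < r) (hs : s.Pairwise fun x y => r ≤ dist x y)
    (hK : Bornology.IsBounded K) : (s ∩ K).Finite := by
  obtain ⟨t, ht, hKt⟩ := Metric.totallyBounded_iff.mp
    (hK.isCompact_closure.totallyBounded.subset subset_closure) (r / 2) (half_pos hr)
  refine (ht.biUnion fun c _ => (?_ : (s ∩ ball c (r / 2)).Subsingleton).finite).subset ?_
  · rintro x ⟨hxs, hxc⟩ y ⟨hys, hyc⟩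
    by_contra hxy
    linarith [hs hxs hys hxy, mem_ball.mp hxc, mem_ball.mp hyc, dist_triangle_right x y c]
  · rintro x ⟨hxs, hxK⟩
    obtain ⟨c, hc, hxc⟩ := mem_iUnion₂.mp (hKt hxK)
    exact mem_biUnion hc ⟨hxs, hxc⟩

theorem Finset.sum_sum_sub_eq_sum_card_nsmul {G M : Type*} [AddCommGroup G] [DecidableEq G]
    [AddCommMonoid M] (A B W : Finset G) (f : G → M)
    (hW : ∀ y ∈ A, ∀ z ∈ B, f (y - z) ≠ 0 → y - z ∈ W) :
    ∑ y ∈ A, ∑ z ∈ B, f (y - z) = ∑ w ∈ W, ((A ×ˢ B).filter fun p => p.1 - p.2 = w).card • f w := by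
  simp_rw [Finset.card_filter, Finset.sum_smul, ite_smul, one_smul, zero_smul]
  rw [← Finset.sum_product' (f := fun y z => f (y - z)), Finset.sum_comm]
  refine Finset.sum_congr rfl fun p hp => ?_
  rw [Finset.sum_ite_eq]
  obtain ⟨hy, hz⟩ := Finset.mem_product.mp hp
  split_ifs with hpW
  · rfl
  · exact not_not.mp (mt (hW p.1 hy p.2 hz) hpW)

theorem finsum_mem_finsum_mem_sub_eq {G M : Type*} [AddCommGroup G] [AddCommMonoid M]
    {A B W : Set G} (hA : A.Finite) (hB : B.Finite) (hW : W.Finite) (f : G → M)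
    (hfW : ∀ y ∈ A, ∀ z ∈ B, f (y - z) ≠ 0 → y - z ∈ W) :
    ∑ᶠ y ∈ A, ∑ᶠ z ∈ B, f (y - z) = ∑ᶠ w ∈ W, {p ∈ A ×ˢ B | p.1 - p.2 = w}.ncard • f w := by
  classical
  have hpairs : ∀ w, {p ∈ A ×ˢ B | p.1 - p.2 = w}
      = ↑((hA.toFinset ×ˢ hB.toFinset).filter fun p => p.1 - p.2 = w) := fun w => by
    ext; simp
  simp_rw [finsum_mem_eq_finite_toFinset_sum _ hA, finsum_mem_eq_finite_toFinset_sum _ hB,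
    finsum_mem_eq_finite_toFinset_sum _ hW, hpairs, Set.ncard_coe_finset]
  exact Finset.sum_sum_sub_eq_sum_card_nsmul _ _ _ f fun y hy z hz hf =>
    hW.mem_toFinset.mpr (hfW y (hA.mem_toFinset.mp hy) z (hB.mem_toFinset.mp hz) hf)

section Delone

variable {m d : ℕ} {Λ : Fin m → Set (EuclideanSpace ℝ (Fin d))}

theorem IsDelone.finite_inter {D K : Set (EuclideanSpace ℝ (Fin d))} (hD : IsDelone D)
    (hK : Bornology.IsBounded K) : (D ∩ K).Finite :=
  let ⟨_, hr, hs⟩ := hD.1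
  Set.Pairwise.finite_inter_of_isBounded hr hs hK

theorem HasFLC.finite_sub_inter (hFLC : HasFLC Λ) {i : Fin m} (hΛi : IsDelone (Λ i)) (j : Fin m)
    {K : Set (EuclideanSpace ℝ (Fin d))} (hK : Bornology.IsBounded K) :
    ((Λ i - Λ j) ∩ K).Finite := by
  obtain ⟨R, hR, hKR⟩ := hK.subset_closedBall_lt 0 0
  obtain ⟨Y, hY, -, hpatch⟩ := hFLC R hR
  refine (hY.biUnion fun c _ =>
    (hΛi.finite_inter (isBounded_closedBall (x := c) (r := R))).image (· - c)).subset ?_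
  rintro _ ⟨⟨y, hy, z, hz, rfl⟩, hyzK⟩
  obtain ⟨c, hcY, hzc⟩ := hpatch z (mem_iUnion.mpr ⟨j, hz⟩)
  have hyz : y ∈ closedBall z R ∩ Λ i := by
    refine ⟨?_, hy⟩
    simpa [dist_eq_norm] using hKR hyzK
  rw [hzc i] at hyz
  obtain ⟨u, hu, rfl⟩ := hyz
  exact mem_biUnion hcY ⟨u, hu.symm, show u - c = u + (z - c) - z by abel⟩

theorem mem_twoPointCluster {i j k : Fin m} {y z p : EuclideanSpace ℝ (Fin d)} :
    p ∈ twoPointCluster i j y z k ↔ k = i ∧ p = y ∨ k = j ∧ p = z := by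
  simp only [twoPointCluster]
  split_ifs <;> simp_all [or_comm]

theorem twoPointCluster_isCluster {i j : Fin m} {y z : EuclideanSpace ℝ (Fin d)}
    (hy : y ∈ Λ i) (hz : z ∈ Λ j) (k : Fin m) :
    twoPointCluster i j y z k ⊆ Λ k ∧ (twoPointCluster i j y z k).Finite := by
  constructor
  · rintro p hp
    rcases mem_twoPointCluster.mp hp with ⟨rfl, rfl⟩ | ⟨rfl, rfl⟩ <;> assumption
  · refine (Set.toFinite {y, z}).subset fun p hp => ?_
    rcases mem_twoPointCluster.mp hp with ⟨-, rfl⟩ | ⟨-, rfl⟩ <;> simp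

theorem image_add_twoPointCluster_subset_iff {i j : Fin m} {x y z : EuclideanSpace ℝ (Fin d)}
    {A : Set (EuclideanSpace ℝ (Fin d))} :
    (∀ k, (x + ·) '' twoPointCluster i j y z k ⊆ A ∩ Λ k) ↔
      x + y ∈ A ∩ Λ i ∧ x + z ∈ A ∩ Λ j := by
  constructor
  · intro h
    exact ⟨h i (mem_image_of_mem _ (mem_twoPointCluster.mpr (.inl ⟨rfl, rfl⟩))),
      h j (mem_image_of_mem _ (mem_twoPointCluster.mpr (.inr ⟨rfl, rfl⟩)))⟩
  · rintro ⟨hy, hz⟩ k _ ⟨p, hp, rfl⟩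
    rcases mem_twoPointCluster.mp hp with ⟨rfl, rfl⟩ | ⟨rfl, rfl⟩ <;> assumption

theorem clusterCount_twoPointCluster (i j : Fin m) (y z : EuclideanSpace ℝ (Fin d))
    (A : Set (EuclideanSpace ℝ (Fin d))) :
    clusterCount Λ (twoPointCluster i j y z) A
      = {p ∈ (Λ i ∩ A) ×ˢ (Λ j ∩ A) | p.1 - p.2 = y - z}.ncard := by
  have hinj : Function.Injective fun x : EuclideanSpace ℝ (Fin d) => (x + y, x + z) :=
    fun x x' h => add_right_cancel (congrArg Prod.fst h)
  rw [clusterCount, ← Set.ncard_image_of_injective _ hinj]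
  simp_rw [image_add_twoPointCluster_subset_iff]
  congr 1
  ext ⟨u, v⟩
  constructor
  · rintro ⟨x, ⟨hu, hv⟩, hxuv⟩
    obtain ⟨rfl, rfl⟩ := Prod.mk.inj hxuv
    exact ⟨⟨⟨hu.2, hu.1⟩, hv.2, hv.1⟩, add_sub_add_left_eq_sub _ _ _⟩
  · rintro ⟨⟨⟨huΛ, huA⟩, hvΛ, hvA⟩, huv⟩
    dsimp only at huv huΛ huA hvΛ hvA
    have hv : u - y + z = v := by rw [← sub_sub_self u v, huv]; abel
    refine ⟨u - y, ⟨?_, ?_⟩, ?_⟩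
    · rw [sub_add_cancel]; exact ⟨huA, huΛ⟩
    · rw [hv]; exact ⟨hvA, hvΛ⟩
    · show (u - y + y, u - y + z) = (u, v)
      rw [sub_add_cancel, hv]

variable {F : ℕ → Set (EuclideanSpace ℝ (Fin d))}
  {freq : (Fin m → Set (EuclideanSpace ℝ (Fin d))) → ℝ}

theorem HasUCFWith.tendsto_pairCount (hUCF : HasUCFWith Λ F freq) {i j : Fin m}
    {y z : EuclideanSpace ℝ (Fin d)} (hy : y ∈ Λ i) (hz : z ∈ Λ j) :
    Tendsto (fun n => ({p ∈ (Λ i ∩ F n) ×ˢ (Λ j ∩ F n) | p.1 - p.2 = y - z}.ncard : ℝ)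
      / (volume (F n)).toReal) atTop (𝓝 (freq (twoPointCluster i j y z))) := by
  simpa only [zero_add, image_id', clusterCount_twoPointCluster] using
    (hUCF _ (twoPointCluster_isCluster hy hz)).tendsto_at 0

theorem HasUCFWith.freq_twoPointCluster_eq (hUCF : HasUCFWith Λ F freq) {i j : Fin m}
    {y z y' z' : EuclideanSpace ℝ (Fin d)} (hy : y ∈ Λ i) (hz : z ∈ Λ j) (hy' : y' ∈ Λ i)
    (hz' : z' ∈ Λ j) (h : y - z = y' - z') :
    freq (twoPointCluster i j y z) = freq (twoPointCluster i j y' z') :=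
  tendsto_nhds_unique (hUCF.tendsto_pairCount hy hz) (h ▸ hUCF.tendsto_pairCount hy' hz')

-- `c_{ij}(w)`, read off the representative `(w + z, z)`; junk outside `Λᵢ - Λⱼ`.
variable (Λ freq) in
noncomputable def pairFreq (i j : Fin m) (w : EuclideanSpace ℝ (Fin d)) : ℝ :=
  let z := Classical.epsilon fun z => z ∈ Λ j ∧ w + z ∈ Λ i
  freq (twoPointCluster i j (w + z) z)

theorem HasUCFWith.pairFreq_sub (hUCF : HasUCFWith Λ F freq) {i j : Fin m}
    {y z : EuclideanSpace ℝ (Fin d)} (hy : y ∈ Λ i) (hz : z ∈ Λ j) :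
    pairFreq Λ freq i j (y - z) = freq (twoPointCluster i j y z) := by
  have hspec := Classical.epsilon_spec (p := fun z' => z' ∈ Λ j ∧ y - z + z' ∈ Λ i)
    ⟨z, hz, by rwa [sub_add_cancel]⟩
  exact hUCF.freq_twoPointCluster_eq hspec.2 hspec.1 hy hz (add_sub_cancel_right _ _)

theorem tendsto_correlationSum {i j : Fin m} (hΛi : IsDelone (Λ i)) (hΛj : IsDelone (Λ j))
    (hFLC : HasFLC Λ) (hF : ∀ n, Bornology.IsBounded (F n)) (hUCF : HasUCFWith Λ F freq)
    {φ : EuclideanSpace ℝ (Fin d) → ℂ} (hφ : HasCompactSupport φ) :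
    Tendsto (fun n => ((volume (F n)).toReal : ℂ)⁻¹ *
        ∑ᶠ y ∈ Λ i ∩ F n, ∑ᶠ z ∈ Λ j ∩ F n, φ (y - z)) atTop
      (𝓝 (∑ᶠ w ∈ (Λ i - Λ j) ∩ tsupport φ, (pairFreq Λ freq i j w : ℂ) * φ w)) := by
  classical
  have hW := hFLC.finite_sub_inter hΛi j hφ.isCompact.isBounded
  have hcount : ∀ n, ∑ᶠ y ∈ Λ i ∩ F n, ∑ᶠ z ∈ Λ j ∩ F n, φ (y - z)
      = ∑ w ∈ hW.toFinset,
          ({p ∈ (Λ i ∩ F n) ×ˢ (Λ j ∩ F n) | p.1 - p.2 = w}.ncard : ℂ) * φ w := fun n => by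
    rw [finsum_mem_finsum_mem_sub_eq (hΛi.finite_inter (hF n)) (hΛj.finite_inter (hF n)) hW φ
      fun y hy z hz hφyz => ⟨sub_mem_sub hy.1 hz.1, subset_tsupport φ hφyz⟩,
      finsum_mem_eq_finite_toFinset_sum _ hW]
    simp_rw [nsmul_eq_mul]
  rw [finsum_mem_eq_finite_toFinset_sum _ hW]
  simp_rw [hcount, Finset.mul_sum]
  refine tendsto_finsetSum _ fun w hw => ?_
  obtain ⟨⟨y, hy, z, hz, rfl⟩, -⟩ := hW.mem_toFinset.mp hw
  rw [hUCF.pairFreq_sub hy hz]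
  refine (((Complex.continuous_ofReal.tendsto _).comp
    (hUCF.tendsto_pairCount hy hz)).mul_const (φ (y - z))).congr fun n => ?_
  simp only [Function.comp_apply, Complex.ofReal_div, Complex.ofReal_natCast]
  ring

end Delone

theorem stmt_15_general {m d : ℕ}
    (Λ : Fin m → Set (EuclideanSpace ℝ (Fin d)))
    (hDel : IsDeloneMultiset Λ) (hFLC : HasFLC Λ)
    (F : ℕ → Set (EuclideanSpace ℝ (Fin d))) (hF : IsVanHove F)
    (freq : (Fin m → Set (EuclideanSpace ℝ (Fin d))) → ℝ)
    (hUCF : HasUCFWith Λ F freq)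
    (a : Fin m → ℂ)
    (φ : EuclideanSpace ℝ (Fin d) → ℂ)
    (hφs : HasCompactSupport φ) :
    (∀ i j : Fin m, ∀ y z y' z' : EuclideanSpace ℝ (Fin d),
        y ∈ Λ i → z ∈ Λ j → y' ∈ Λ i → z' ∈ Λ j → y - z = y' - z' →
        freq (twoPointCluster i j y z) = freq (twoPointCluster i j y' z')) ∧
    (∀ i j : Fin m, ((Λ i - Λ j) ∩ tsupport φ).Finite) ∧
    (∃ c : Fin m → Fin m → EuclideanSpace ℝ (Fin d) → ℝ,
      (∀ i j : Fin m, ∀ y ∈ Λ i, ∀ z ∈ Λ j,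
        c i j (y - z) = freq (twoPointCluster i j y z)) ∧
      Tendsto
        (fun n => (((volume (F n)).toReal : ℂ))⁻¹ *
          ∑ i : Fin m, ∑ j : Fin m, a i * (starRingEnd ℂ) (a j) *
            ∑ᶠ y ∈ Λ i ∩ F n, ∑ᶠ z ∈ Λ j ∩ F n, φ (y - z))
        atTop
        (𝓝 (∑ i : Fin m, ∑ j : Fin m, a i * (starRingEnd ℂ) (a j) *
          ∑ᶠ w ∈ (Λ i - Λ j) ∩ tsupport φ, (c i j w : ℂ) * φ w))) := by
  refine ⟨fun _ _ _ _ _ _ => hUCF.freq_twoPointCluster_eq,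
    fun i j => hFLC.finite_sub_inter (hDel.1 i) j hφs.isCompact.isBounded,
    pairFreq Λ freq, fun i j y hy z hz => hUCF.pairFreq_sub hy hz, ?_⟩
  simp_rw [Finset.mul_sum, mul_left_comm _ (_ * _)]
  exact tendsto_finsetSum _ fun i _ => tendsto_finsetSum _ fun j _ =>
    (tendsto_correlationSum (hDel.1 i) (hDel.1 j) hFLC (fun n => (hF.1 n).2.1) hUCF hφs).const_mul _

/-- existence and form of the autocorrelation, eq. (7) of the paper:
for an FLC Delone multiset with UCF, weights `aᵢ ∈ ℂ`, and a continuous compactly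
supported test function `φ`:
(1) `freq(P^{i,j}(y,z),Λ)` only depends on `i, j, y - z`;
(2) `(Λᵢ - Λⱼ) ∩ supp(φ)` is finite;
(3) `(1/Vol Fₙ) Σ_{i,j} aᵢ conj(aⱼ) Σ_{y∈Λᵢ∩Fₙ} Σ_{z∈Λⱼ∩Fₙ} φ(y-z)` converges to
    `Σ_{i,j} aᵢ conj(aⱼ) Σ_{w∈(Λᵢ-Λⱼ)∩supp φ} c_{ij}(w) φ(w)`, where
    `c_{ij}(y-z) = freq(P^{i,j}(y,z),Λ)`. -/
theorem stmt_15 {m d : ℕ} (hm : 1 ≤ m) (hd : 1 ≤ d)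
    (Λ : Fin m → Set (EuclideanSpace ℝ (Fin d)))
    (hDel : IsDeloneMultiset Λ) (hFLC : HasFLC Λ)
    (F : ℕ → Set (EuclideanSpace ℝ (Fin d))) (hF : IsVanHove F)
    (freq : (Fin m → Set (EuclideanSpace ℝ (Fin d))) → ℝ)
    (hUCF : HasUCFWith Λ F freq)
    (a : Fin m → ℂ)
    (φ : EuclideanSpace ℝ (Fin d) → ℂ) (hφc : Continuous φ)
    (hφs : HasCompactSupport φ) :
    (∀ i j : Fin m, ∀ y z y' z' : EuclideanSpace ℝ (Fin d),
        y ∈ Λ i → z ∈ Λ j → y' ∈ Λ i → z' ∈ Λ j → y - z = y' - z' →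
        freq (twoPointCluster i j y z) = freq (twoPointCluster i j y' z')) ∧
    (∀ i j : Fin m, ((Λ i - Λ j) ∩ tsupport φ).Finite) ∧
    (∃ c : Fin m → Fin m → EuclideanSpace ℝ (Fin d) → ℝ,
      (∀ i j : Fin m, ∀ y ∈ Λ i, ∀ z ∈ Λ j,
        c i j (y - z) = freq (twoPointCluster i j y z)) ∧
      Tendsto
        (fun n => (((volume (F n)).toReal : ℂ))⁻¹ *
          ∑ i : Fin m, ∑ j : Fin m, a i * (starRingEnd ℂ) (a j) *
            ∑ᶠ y ∈ Λ i ∩ F n, ∑ᶠ z ∈ Λ j ∩ F n, φ (y - z))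
        atTop
        (𝓝 (∑ i : Fin m, ∑ j : Fin m, a i * (starRingEnd ℂ) (a j) *
          ∑ᶠ w ∈ (Λ i - Λ j) ∩ tsupport φ, (c i j w : ℂ) * φ w))) :=
  stmt_15_general Λ hDel hFLC F hF freq hUCF a φ hφs
end
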